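/- arXiv:2109.05503 — 7 statements merged into one kernel-verified Lean document; each statement's English description precedes it below -/
import Mathlib

section
/- Let (X, C) be a category base and let S be a Baire set in (X, C) that is abundant. Then there exists a region C₀ ∈ C such that C₀ − S is meager. -/
universe u

/-- `(Y, C)` is a category base: `Y` is nonempty, the regions of `C` cover `Y`, and
Morgan's second axiom holds: for every region `A` and every nonempty family `D` of
pairwise disjoint regions with `card D < card C`, (i) if `A ∩ ⋃₀ D` contains a region
then `A ∩ F` contains a region for some `F ∈ D`, and (ii) if `A ∩ ⋃₀ D` contains no
region then some region `B ⊆ A` is disjoint from every member of `D`. -/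
structure IsCategoryBase {X : Type u} (Y : Set X) (C : Set (Set X)) : Prop where
  carrier_nonempty : Y.Nonempty
  cover : ⋃₀ C = Y
  meet : ∀ A ∈ C, ∀ D : Set (Set X), D ⊆ C → D.Nonempty → D.Pairwise Disjoint →
    Cardinal.mk D < Cardinal.mk C →
    (∃ E ∈ C, E ⊆ A ∩ ⋃₀ D) → ∃ F ∈ D, ∃ E ∈ C, E ⊆ A ∩ F
  avoid : ∀ A ∈ C, ∀ D : Set (Set X), D ⊆ C → D.Nonempty → D.Pairwise Disjoint →
    Cardinal.mk D < Cardinal.mk C →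
    ¬ (∃ E ∈ C, E ⊆ A ∩ ⋃₀ D) → ∃ B ∈ C, B ⊆ A ∧ ∀ F ∈ D, Disjoint B F

/-- A set `S` is singular w.r.t. the family of regions `C` if every region contains a
subregion disjoint from `S`. -/
def Singular {X : Type u} (C : Set (Set X)) (S : Set X) : Prop :=
  ∀ A ∈ C, ∃ B ∈ C, B ⊆ A ∧ Disjoint B S

/-- A set is meager if it is a countable union of singular sets. -/
def MeagerIn {X : Type u} (C : Set (Set X)) (S : Set X) : Prop :=
  ∃ f : ℕ → Set X, (∀ n, Singular C (f n)) ∧ S = ⋃ n, f n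

/-- A set is abundant if it is not meager. -/
def Abundant {X : Type u} (C : Set (Set X)) (S : Set X) : Prop :=
  ¬ MeagerIn C S

/-- A set `S` is a Baire set in the category base `(Y, C)` if every region contains a
subregion in which either `S` or its complement `Y \ S` is meager. -/
def BaireSet {X : Type u} (Y : Set X) (C : Set (Set X)) (S : Set X) : Prop :=
  ∀ A ∈ C, ∃ B ∈ C, B ⊆ A ∧ (MeagerIn C (S ∩ B) ∨ MeagerIn C ((Y \ S) ∩ B))

/-- A Baire base is a category base all of whose regions are abundant. -/
def IsBaireBase {X : Type u} (C : Set (Set X)) : Prop :=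
  ∀ A ∈ C, Abundant C A

/-- `C'` is a π-base for `C` if `C' ⊆ C` and every region of `C` contains a region of `C'`. -/
def IsPiBase {X : Type u} (C C' : Set (Set X)) : Prop :=
  C' ⊆ C ∧ ∀ A ∈ C, ∃ B ∈ C', B ⊆ A

/-- `C` is `χ`-saturated: every subfamily of `C` of cardinality `χ` contains two distinct
members with nonempty intersection. -/
def Saturated {X : Type u} (C : Set (Set X)) (χ : Cardinal.{u}) : Prop :=
  ∀ E ⊆ C, Cardinal.mk E = χ → ∃ A ∈ E, ∃ B ∈ E, A ≠ B ∧ (A ∩ B).Nonempty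

/-- The family `K = {X − F : F ∈ C'}` of complements of members of `C'`. -/
def KFam {X : Type u} (C' : Set (Set X)) : Set (Set X) :=
  compl '' C'

/-- `⋂_{<#(X)} K` : all sets representable as the intersection of a nonempty subfamily of
`KFam C'` of cardinality less than `#(X)`. -/
def InterFam {X : Type u} (C' : Set (Set X)) : Set (Set X) :=
  {S | ∃ E ⊆ KFam C', E.Nonempty ∧ Cardinal.mk E < Cardinal.mk X ∧ S = ⋂₀ E}

/-- `⋃_σ ⋂_{<#(X)} K` : all sets representable as a countable union of sets from
`InterFam C'`. -/
def SigmaInterFam {X : Type u} (C' : Set (Set X)) : Set (Set X) :=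
  {S | ∃ f : ℕ → Set X, (∀ n, f n ∈ InterFam C') ∧ S = ⋃ n, f n}

/-- `A` is completely non-Baire in the region `D` (w.r.t. the category base `(Y, C)`):
for every Baire set `B` with `B ∩ D` abundant, both `A ∩ B` and `(D \ A) ∩ B` are
abundant. -/
def CompletelyNonBaireIn {X : Type u} (Y : Set X) (C : Set (Set X)) (A D : Set X) : Prop :=
  ∀ B : Set X, BaireSet Y C B → Abundant C (B ∩ D) →
    Abundant C (A ∩ B) ∧ Abundant C ((D \ A) ∩ B)

/-- `A` is completely non-Baire if it is completely non-Baire in every region. -/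
def CompletelyNonBaire {X : Type u} (Y : Set X) (C : Set (Set X)) (A : Set X) : Prop :=
  ∀ D ∈ C, CompletelyNonBaireIn Y C A D


section Aux

variable {X : Type u} (C : Set (Set X)) (S : Set X) (r : ↥C → ↥C → Prop)

/-- The property that a suitable region `G'` can be added at stage `a` of the
transfinite construction of a "catching" disjoint family. -/
def AuxQ (G : ↥C → Option (Set X)) (a : ↥C) : Prop :=
  ∃ G', G' ∈ C ∧ MeagerIn C (S ∩ G') ∧ G' ⊆ (a : Set X) ∧
    ∀ b, ∀ _ : r b a, ∀ E : Set X, G b = some E → Disjoint G' E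

open Classical in
/-- Transfinite construction of a catching disjoint family of regions on each of
which `S` is meager. -/
noncomputable def auxStep (wf : WellFounded r) : ↥C → Option (Set X) :=
  wf.fix fun a IH =>
    if h : ∃ G', G' ∈ C ∧ MeagerIn C (S ∩ G') ∧ G' ⊆ (a : Set X) ∧
        ∀ b, ∀ hb : r b a, ∀ E : Set X, IH b hb = some E → Disjoint G' E
    then some h.choose else none

open Classical in
theorem auxStep_eq (wf : WellFounded r) (a : ↥C) :
    auxStep C S r wf a =
      if h : AuxQ C S r (auxStep C S r wf) a then some h.choose else none := by
  exact WellFounded.fix_eq wf _ a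

end Aux

/-- If `S` is an abundant Baire set in a category base `(X, C)`, then there
is a region `C₀` such that `C₀ − S` is meager. -/
theorem abundant_baire_contains_region_mod_meager {X : Type u}
    (C : Set (Set X)) (hCB : IsCategoryBase (Set.univ : Set X) C)
    (S : Set X) (hS : BaireSet Set.univ C S) (hab : Abundant C S) :
    ∃ C₀ ∈ C, MeagerIn C (C₀ \ S) := by
  classical
  by_contra hcon
  push_neg at hcon
  -- Step 1: every region contains a subregion on which S is meager.
  have hpi : ∀ A ∈ C, ∃ B ∈ C, B ⊆ A ∧ MeagerIn C (S ∩ B) := by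
    intro A hA
    obtain ⟨B, hBC, hBA, hm | hm⟩ := hS A hA
    · exact ⟨B, hBC, hBA, hm⟩
    · exfalso
      apply hcon B hBC
      have heq : (Set.univ \ S) ∩ B = B \ S := by
        ext x; simp [Set.mem_diff]; tauto
      rwa [heq] at hm
  -- Step 2: a well-order of the regions with small initial segments.
  obtain ⟨r, wo, hord⟩ := Cardinal.ord_eq (↥C)
  haveI : IsWellOrder (↥C) r := wo
  set G : ↥C → Option (Set X) := auxStep C S r IsWellFounded.wf with hGdef
  have hG : ∀ a, G a = if h : AuxQ C S r G a then some h.choose else none := fun a =>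
    auxStep_eq C S r IsWellFounded.wf a
  have hsome : ∀ a (E : Set X), G a = some E →
      E ∈ C ∧ MeagerIn C (S ∩ E) ∧ E ⊆ (a : Set X) ∧
        ∀ b, r b a → ∀ F : Set X, G b = some F → Disjoint E F := by
    intro a E hE
    rw [hG a] at hE
    split_ifs at hE with hq
    · obtain ⟨h1, h2, h3, h4⟩ := hq.choose_spec
      injection hE with hE'
      subst hE'
      exact ⟨h1, h2, h3, fun b hb F hF => h4 b hb F hF⟩
  set D : Set (Set X) := {E : Set X | ∃ a : ↥C, G a = some E} with hDdef
  have hDsubC : D ⊆ C := by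
    rintro E ⟨a, ha⟩
    exact (hsome a E ha).1
  have hDdis : D.Pairwise Disjoint := by
    rintro E ⟨a, ha⟩ F ⟨b, hb⟩ hne
    rcases trichotomous_of r a b with h | h | h
    · exact ((hsome b F hb).2.2.2 a h E ha).symm
    · subst h
      rw [ha] at hb
      injection hb with hb'
      exact absurd hb' hne
    · exact (hsome a E ha).2.2.2 b h F hb
  -- the family of regions chosen before stage a
  set prevSet : ↥C → Set (Set X) := fun a => {E : Set X | ∃ b : ↥C, r b a ∧ G b = some E}
    with hprevdef
  have hprevD : ∀ a, prevSet a ⊆ D := by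
    rintro a E ⟨b, _, hGb⟩
    exact ⟨b, hGb⟩
  have hprevC : ∀ a, prevSet a ⊆ C := fun a => (hprevD a).trans hDsubC
  have hprevdis : ∀ a, (prevSet a).Pairwise Disjoint := fun a => hDdis.mono (hprevD a)
  have hcard : ∀ a : ↥C, Cardinal.mk (prevSet a) < Cardinal.mk C := by
    intro a
    have h1 : prevSet a ⊆ Set.range (fun b : {b : ↥C // r b a} => (G ↑b).getD ∅) := by
      rintro E ⟨b, hb, hE⟩
      exact ⟨⟨b, hb⟩, by simp [hE]⟩
    calc Cardinal.mk (prevSet a) ≤ _ := Cardinal.mk_le_mk_of_subset h1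
      _ ≤ Cardinal.mk {b : ↥C // r b a} := Cardinal.mk_range_le
      _ < Cardinal.mk (↥C) := by
          rw [← Ordinal.card_typein]
          exact Cardinal.card_typein_lt (r := r) a hord
  -- Step 3: the family D is catching: every region meets a member of D on a region.
  have hcatch : ∀ A, A ∈ C → ∃ B ∈ D, ∃ E ∈ C, E ⊆ A ∩ B := by
    intro A hA
    set a : ↥C := ⟨A, hA⟩ with hadef
    cases hGa : G a with
    | some E =>
      obtain ⟨hEC, _, hEa, _⟩ := hsome a E hGa
      refine ⟨E, ?_, E, hEC, Set.subset_inter hEa le_rfl⟩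
      exact ⟨a, hGa⟩
    | none =>
      have hq : ¬ AuxQ C S r G a := by
        intro h
        rw [hG a] at hGa
        rw [dif_pos h] at hGa
        cases hGa
      by_cases hc : ∃ B ∈ prevSet a, ∃ E ∈ C, E ⊆ A ∩ B
      · obtain ⟨B, hBp, E, hEC, hE⟩ := hc
        exact ⟨B, hprevD a hBp, E, hEC, hE⟩
      · exfalso
        apply hq
        by_cases hne : (prevSet a).Nonempty
        · have hno : ¬ ∃ E ∈ C, E ⊆ A ∩ ⋃₀ (prevSet a) := by
            intro hex
            obtain ⟨F, hF, E, hEC, hE⟩ :=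
              hCB.meet A hA (prevSet a) (hprevC a) hne (hprevdis a) (hcard a) hex
            exact hc ⟨F, hF, E, hEC, hE⟩
          obtain ⟨B₀, hB₀C, hB₀a, hB₀d⟩ :=
            hCB.avoid A hA (prevSet a) (hprevC a) hne (hprevdis a) (hcard a) hno
          obtain ⟨B', hB'C, hB'B, hB'm⟩ := hpi B₀ hB₀C
          exact ⟨B', hB'C, hB'm, hB'B.trans hB₀a,
            fun b hb E hGb => Disjoint.mono_left hB'B (hB₀d E ⟨b, hb, hGb⟩)⟩
        · obtain ⟨B', hB'C, hB'A, hB'm⟩ := hpi A hA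
          exact ⟨B', hB'C, hB'm, hB'A,
            fun b hb E hGb => absurd (⟨E, b, hb, hGb⟩ : (prevSet a).Nonempty) hne⟩
  -- Step 4: decompose S along D and conclude that S is meager.
  have hdec : ∀ E : Set X, E ∈ D → ∃ f : ℕ → Set X,
      (∀ n, Singular C (f n)) ∧ S ∩ E = ⋃ n, f n := by
    rintro E ⟨a, ha⟩
    exact (hsome a E ha).2.1
  choose g hgS hgU using hdec
  set T : ℕ → Set X := fun n => ⋃ (E : Set X) (h : E ∈ D), (g E h n ∩ E) with hTdef
  apply hab
  refine ⟨fun n => Nat.casesOn n (S \ ⋃₀ D) fun m => T m ∩ S, ?_, ?_⟩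
  · intro n
    cases n with
    | zero =>
      intro A hA
      obtain ⟨B, hBD, E, hEC, hE⟩ := hcatch A hA
      refine ⟨E, hEC, hE.trans Set.inter_subset_left, ?_⟩
      rw [Set.disjoint_left]
      intro x hxE hxS
      exact hxS.2 ⟨B, hBD, (hE hxE).2⟩
    | succ m =>
      intro A hA
      obtain ⟨B, hBD, E, hEC, hE⟩ := hcatch A hA
      obtain ⟨E', hE'C, hE'E, hdisj⟩ := hgS B hBD m E hEC
      refine ⟨E', hE'C, hE'E.trans (hE.trans Set.inter_subset_left), ?_⟩
      rw [Set.disjoint_left]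
      rintro x hxE' ⟨hxT, _⟩
      simp only [hTdef, Set.mem_iUnion] at hxT
      obtain ⟨B', hB'D, hxg, hxB'⟩ := hxT
      by_cases hBB : B' = B
      · subst hBB
        exact (Set.disjoint_left.mp hdisj hxE') hxg
      · exact (Set.disjoint_left.mp (hDdis hB'D hBD hBB) hxB') (hE (hE'E hxE')).2
  · apply Set.Subset.antisymm
    · intro x hx
      by_cases hxD : x ∈ ⋃₀ D
      · obtain ⟨B, hBD, hxB⟩ := hxD
        have hx2 : x ∈ ⋃ n, g B hBD n := by
          rw [← hgU B hBD]; exact ⟨hx, hxB⟩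
        obtain ⟨n, hn⟩ := Set.mem_iUnion.mp hx2
        refine Set.mem_iUnion.mpr ⟨n + 1, ?_⟩
        refine ⟨?_, hx⟩
        simp only [hTdef, Set.mem_iUnion]
        exact ⟨B, hBD, hn, hxB⟩
      · exact Set.mem_iUnion.mpr ⟨0, hx, hxD⟩
    · intro x hx
      obtain ⟨n, hn⟩ := Set.mem_iUnion.mp hx
      cases n with
      | zero => exact hn.1
      | succ m => exact hn.2
end

section
/- Let (Y, N) be a category base. Then there exists a pairwise disjoint subfamily M of N such that Y − ⋃M is singular. Moreover, M can be chosen so that for every region N₀ ∈ N there exists a region M₀ ∈ M such that N₀ ∩ M₀ contains a region. -/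
universe u

/-- In any category base `(Y, N)` there is a pairwise disjoint subfamily `M`
of `N` such that `Y − ⋃M` is singular; moreover `M` can be chosen so that every region
`N₀ ∈ N` meets some `M₀ ∈ M` in a set containing a region. -/
theorem exists_disjoint_subfamily {Y : Type u}
    (N : Set (Set Y)) (hCB : IsCategoryBase (Set.univ : Set Y) N) :
    ∃ M ⊆ N, M.Pairwise Disjoint ∧ Singular N (⋃₀ M)ᶜ ∧
      ∀ N₀ ∈ N, ∃ M₀ ∈ M, ∃ E ∈ N, E ⊆ N₀ ∩ M₀ := by
  classical
  obtain ⟨r, hwo, hord⟩ := Cardinal.ord_eq (↥N)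
  haveI := hwo
  -- transfinite recursion: at stage i pick, if possible, a region inside i disjoint
  -- from everything picked before
  let F : (i : ↥N) → ((j : ↥N) → r j i → Option (Set Y)) → Option (Set Y) :=
    fun i rec =>
      if h : ∃ B, B ∈ N ∧ B ⊆ (i : Set Y) ∧
          ∀ j, (hj : r j i) → ∀ C, rec j hj = some C → Disjoint B C
      then some h.choose else none
  let f : ↥N → Option (Set Y) := hwo.wf.fix F
  have hfeq : ∀ i, f i = F i (fun j _ => f j) := fun i => hwo.wf.fix_eq F i
  set P : ↥N → Set Y → Prop := fun i B =>
    B ∈ N ∧ B ⊆ (i : Set Y) ∧ ∀ j, r j i → ∀ C, f j = some C → Disjoint B C with hP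
  have hsome : ∀ i B, f i = some B → P i B := by
    intro i B hB
    rw [hfeq i] at hB
    simp only [F] at hB
    split_ifs at hB with h
    · obtain rfl : h.choose = B := Option.some_injective _ hB
      obtain ⟨h1, h2, h3⟩ := h.choose_spec
      rw [hP]
      exact ⟨h1, h2, h3⟩
  have hnone : ∀ i, f i = none → ¬ ∃ B, P i B := by
    intro i hi
    rw [hfeq i] at hi
    simp only [F] at hi
    split_ifs at hi with h
    rintro ⟨B, hB⟩
    rw [hP] at hB
    exact h ⟨B, hB.1, hB.2.1, hB.2.2⟩
  set M : Set (Set Y) := {B | ∃ i, f i = some B} with hM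
  have hMN : M ⊆ N := by
    rintro B ⟨i, hi⟩
    exact ((hP ▸ hsome i B hi) : _ ∧ _).1
  have hPdef : ∀ i B, P i B ↔ (B ∈ N ∧ B ⊆ (i : Set Y) ∧
      ∀ j, r j i → ∀ C, f j = some C → Disjoint B C) := by
    intro i B; rw [hP]
  have hMdisj : M.Pairwise Disjoint := by
    rintro B ⟨i, hi⟩ C ⟨j, hj⟩ hne
    rcases trichotomous_of (r := r) i j with h | h | h
    · exact (((hPdef j C).mp (hsome j C hj)).2.2 i h B hi).symm
    · exact absurd (hi.symm.trans (h ▸ hj)) (by simpa using hne)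
    · exact ((hPdef i B).mp (hsome i B hi)).2.2 j h C hj
  have key : ∀ A ∈ N, ∃ M₀ ∈ M, ∃ E ∈ N, E ⊆ A ∩ M₀ := by
    intro A hA
    set i : ↥N := ⟨A, hA⟩ with hi
    cases hfi : f i with
    | some B =>
        refine ⟨B, ⟨i, hfi⟩, B, ((hPdef i B).mp (hsome i B hfi)).1, ?_⟩
        exact Set.subset_inter ((hPdef i B).mp (hsome i B hfi)).2.1 le_rfl
    | none =>
        set D : Set (Set Y) := {C | ∃ j, r j i ∧ f j = some C} with hD
        have hDM : D ⊆ M := by rintro C ⟨j, _, hj⟩; exact ⟨j, hj⟩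
        have hDN : D ⊆ N := fun C hC => hMN (hDM hC)
        have hDdisj : D.Pairwise Disjoint := hMdisj.mono hDM
        have hDne : D.Nonempty := by
          rcases Set.eq_empty_or_nonempty D with hemp | hne
          · exfalso
            refine hnone i hfi ⟨A, (hPdef i A).mpr ⟨hA, le_rfl, fun j hj C hC => ?_⟩⟩
            exact absurd (show C ∈ D from ⟨j, hj, hC⟩) (by rw [hemp]; simp)
          · exact hne
        have hDcard : Cardinal.mk D < Cardinal.mk N := by
          have hex : ∀ C : ↥D, ∃ j : ↥N, r j i ∧ f j = some (C : Set Y) := fun C => C.2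
          choose g hg1 hg2 using hex
          have hinj : Function.Injective (fun C => (⟨g C, hg1 C⟩ : {j : ↥N // r j i})) := by
            intro C C' h
            have hgc : g C = g C' := congrArg Subtype.val h
            have h2 : f (g C') = some (C : Set Y) := hgc ▸ hg2 C
            exact Subtype.ext (Option.some_injective _ ((hg2 C').symm.trans h2).symm)
          calc Cardinal.mk ↥D ≤ Cardinal.mk {j : ↥N // r j i} := Cardinal.mk_le_of_injective hinj
            _ = (Ordinal.typein r i).card := Ordinal.card_typein i
            _ < Cardinal.mk ↥N := Cardinal.card_typein_lt i hord
        have hnosub : ¬ ∃ B ∈ N, B ⊆ A ∧ ∀ F ∈ D, Disjoint B F := by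
          rintro ⟨B, hBN, hBA, hBd⟩
          refine hnone i hfi ⟨B, (hPdef i B).mpr ⟨hBN, hBA, fun j hj C hC => ?_⟩⟩
          exact hBd C ⟨j, hj, hC⟩
        have hmeets : ∃ E ∈ N, E ⊆ A ∩ ⋃₀ D := by
          by_contra hcon
          exact hnosub (hCB.avoid A hA D hDN hDne hDdisj hDcard hcon)
        obtain ⟨F₀, hF₀, E, hE, hEsub⟩ := hCB.meet A hA D hDN hDne hDdisj hDcard hmeets
        exact ⟨F₀, hDM hF₀, E, hE, hEsub⟩
  refine ⟨M, hMN, hMdisj, ?_, key⟩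
  intro A hA
  obtain ⟨M₀, hM₀, E, hE, hEsub⟩ := key A hA
  refine ⟨E, hE, fun x hx => (hEsub hx).1, ?_⟩
  rw [Set.disjoint_compl_right_iff_subset]
  exact fun x hx => ⟨M₀, hM₀, (hEsub hx).2⟩
end

section
/- (Fundamental Theorem) Every abundant set in a category base (X, C) is abundant everywhere in some region; that is, for every abundant set A there exists a region C₀ ∈ C such that A ∩ D is abundant for every subregion D of C₀. -/
universe u

theorem exists_blocking_family {X : Type u} {C : Set (Set X)}
    (hCB : IsCategoryBase (Set.univ : Set X) C)
    {G : Set (Set X)} (hGC : G ⊆ C)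
    (hπ : ∀ R ∈ C, ∃ D ∈ G, D ⊆ R) :
    ∃ 𝒟 ⊆ G, 𝒟.Pairwise Disjoint ∧
      ∀ R ∈ C, ∃ D ∈ 𝒟, ∃ E ∈ C, E ⊆ R ∩ D := by
  classical
  set ι := (Cardinal.mk ↥C).ord.ToType with hι
  have hcard : Cardinal.mk ι = Cardinal.mk ↥C := by
    rw [hι, Cardinal.mk_toType, Cardinal.card_ord]
  haveI : IsWellOrder ι (· < ·) :=
    @isWellOrder_lt _ _ _
  obtain ⟨e⟩ := Cardinal.eq.mp hcard
  have wf : WellFounded ((· < ·) : ι → ι → Prop) := IsWellFounded.wf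
  let f : ι → Option (Set X) := wf.fix (C := fun _ => Option (Set X)) fun i prev =>
    if h : ∃ D ∈ G, D ⊆ (e i : Set X) ∧
        ∀ S, (∃ j, ∃ hj : j < i, prev j hj = some S) → Disjoint D S
    then some h.choose else none
  have hfix : ∀ i, f i =
      if h : ∃ D ∈ G, D ⊆ (e i : Set X) ∧
        ∀ S, (∃ j, ∃ hj : j < i, f j = some S) → Disjoint D S
      then some h.choose else none := fun i => wf.fix_eq _ i
  have hmem : ∀ i S, f i = some S → S ∈ G ∧ S ⊆ (e i : Set X) ∧
      ∀ T, (∃ j, ∃ hj : j < i, f j = some T) → Disjoint S T := by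
    intro i S hS
    rw [hfix i] at hS
    split at hS
    · next h =>
      obtain rfl : h.choose = S := by injection hS
      exact h.choose_spec
    · exact absurd hS (by simp)
  set 𝒟 : Set (Set X) := {S | ∃ i, f i = some S} with h𝒟
  have hsub : 𝒟 ⊆ G := by rintro S ⟨i, hi⟩; exact (hmem i S hi).1
  have hpair : 𝒟.Pairwise Disjoint := by
    rintro S ⟨i, hi⟩ T ⟨j, hj⟩ hST
    rcases lt_trichotomy j i with h | h | h
    · exact (hmem i S hi).2.2 T ⟨j, h, hj⟩
    · subst h
      have := hi.symm.trans hj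
      exact absurd (Option.some.inj this) hST
    · exact ((hmem j T hj).2.2 S ⟨i, h, hi⟩).symm
  refine ⟨𝒟, hsub, hpair, ?_⟩
  intro R hR
  set i := e.symm ⟨R, hR⟩ with hi
  have hei : (e i : Set X) = R := by rw [hi, Equiv.apply_symm_apply]
  cases hf : f i with
  | some D =>
    obtain ⟨hDG, hDe, -⟩ := hmem i D hf
    exact ⟨D, ⟨i, hf⟩, D, hGC hDG, Set.subset_inter (hei ▸ hDe) subset_rfl⟩
  | none =>
    have hcond : ¬ ∃ D ∈ G, D ⊆ (e i : Set X) ∧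
        ∀ S, (∃ j, ∃ hj : j < i, f j = some S) → Disjoint D S := by
      intro h
      rw [hfix i, dif_pos h] at hf
      exact absurd hf (by simp)
    set Di : Set (Set X) := {S | ∃ j, ∃ hj : j < i, f j = some S} with hDi
    have hDisub : Di ⊆ 𝒟 := by rintro S ⟨j, hj, hjS⟩; exact ⟨j, hjS⟩
    have hDine : Di.Nonempty := by
      by_contra hne
      rw [Set.not_nonempty_iff_eq_empty] at hne
      obtain ⟨D, hDG, hDR⟩ := hπ R hR
      refine hcond ⟨D, hDG, hei ▸ hDR, fun S hS => ?_⟩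
      have hmem' : S ∈ Di := hS
      rw [hne] at hmem'
      exact hmem'.elim
    have hDiC : Di ⊆ C := fun S hS => hGC (hsub (hDisub hS))
    have hDipair : Di.Pairwise Disjoint := hpair.mono hDisub
    have hDicard : Cardinal.mk ↥Di < Cardinal.mk ↥C := by
      have hinj : ∃ g : ↥Di → {j : ι // j < i}, Function.Injective g := by
        refine ⟨fun S => ⟨S.2.choose, S.2.choose_spec.choose⟩, ?_⟩
        rintro ⟨S, hS⟩ ⟨T, hT⟩ hg
        have h1 := hS.choose_spec.choose_spec
        have h2 := hT.choose_spec.choose_spec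
        simp only [Subtype.mk.injEq] at hg ⊢
        rw [hg] at h1; rw [h1] at h2
        injection h2
      obtain ⟨g, hg⟩ := hinj
      calc Cardinal.mk ↥Di ≤ Cardinal.mk {j : ι // j < i} := Cardinal.mk_le_of_injective hg
        _ = (Ordinal.typein (α := ι) (· < ·) i).card := (Ordinal.card_typein i).symm
        _ < Cardinal.mk ↥C := by
            rw [← Cardinal.lt_ord]
            exact Ordinal.typein_lt_self i
    by_cases hE : ∃ E ∈ C, E ⊆ R ∩ ⋃₀ Di
    · obtain ⟨F, hF, E, hEC, hEsub⟩ := hCB.meet R hR Di hDiC hDine hDipair hDicard hE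
      exact ⟨F, hDisub hF, E, hEC, hEsub⟩
    · obtain ⟨B, hBC, hBR, hBdisj⟩ := hCB.avoid R hR Di hDiC hDine hDipair hDicard hE
      obtain ⟨D, hDG, hDB⟩ := hπ B hBC
      exact absurd ⟨D, hDG, hei ▸ hDB.trans hBR, fun S hS =>
        (hBdisj S hS).mono_left hDB⟩ hcond

/-- The Fundamental Theorem: every abundant set in a category base `(X, C)`
is abundant everywhere in some region: there is a region `C₀` such that `A` is abundant
in every subregion `D` of `C₀`. -/
theorem fundamental_theorem_abundant_everywhere {X : Type u}
    (C : Set (Set X)) (hCB : IsCategoryBase (Set.univ : Set X) C)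
    (A : Set X) (hA : Abundant C A) :
    ∃ C₀ ∈ C, ∀ D ∈ C, D ⊆ C₀ → Abundant C (A ∩ D) := by
  classical
  by_contra hcon
  push_neg at hcon
  set G : Set (Set X) := {D | D ∈ C ∧ MeagerIn C (A ∩ D)} with hG
  have hGC : G ⊆ C := fun D hD => hD.1
  have hπ : ∀ R ∈ C, ∃ D ∈ G, D ⊆ R := by
    intro R hR
    obtain ⟨D, hD, hDR, hmeag⟩ := hcon R hR
    exact ⟨D, ⟨hD, not_not.mp hmeag⟩, hDR⟩
  obtain ⟨𝒟, h𝒟G, hpair, hblock⟩ := exists_blocking_family hCB hGC hπ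
  set F : Set X → ℕ → Set X := fun D n =>
    if h : MeagerIn C (A ∩ D) then h.choose n else ∅ with hF
  have hFs : ∀ D ∈ 𝒟, (∀ n, Singular C (F D n)) ∧ A ∩ D = ⋃ n, F D n := by
    intro D hD
    have h : MeagerIn C (A ∩ D) := (h𝒟G hD).2
    have : F D = h.choose := by rw [hF]; simp [h]
    rw [this]
    exact ⟨h.choose_spec.1, h.choose_spec.2⟩
  apply hA
  refine ⟨fun n => Nat.casesOn n (A \ ⋃₀ 𝒟) (fun m => ⋃ D ∈ 𝒟, F D m), ?_, ?_⟩
  · rintro (_ | m)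
    · -- Singular of A \ ⋃₀ 𝒟
      intro R hR
      obtain ⟨D, hD, E, hEC, hEsub⟩ := hblock R hR
      refine ⟨E, hEC, fun x hx => (hEsub hx).1, ?_⟩
      rw [Set.disjoint_left]
      intro x hxE hxA
      exact hxA.2 ⟨D, hD, (hEsub hxE).2⟩
    · -- Singular of ⋃ D ∈ 𝒟, F D m
      intro R hR
      obtain ⟨D, hD, E, hEC, hEsub⟩ := hblock R hR
      obtain ⟨E', hE'C, hE'E, hE'disj⟩ := (hFs D hD).1 m E hEC
      refine ⟨E', hE'C, fun x hx => (hEsub (hE'E hx)).1, ?_⟩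
      rw [Set.disjoint_left]
      rintro x hxE' hxU
      simp only [Set.mem_iUnion] at hxU
      obtain ⟨D', hD', hxF⟩ := hxU
      by_cases hDD' : D = D'
      · exact (Set.disjoint_left.mp hE'disj) hxE' (hDD' ▸ hxF)
      · have hxD : x ∈ D := (hEsub (hE'E hxE')).2
        have hxD' : x ∈ D' := by
          have : F D' m ⊆ A ∩ D' := by
            rw [(hFs D' hD').2]
            exact Set.subset_iUnion _ m
          exact (this hxF).2
        exact Set.disjoint_left.mp (hpair hD hD' hDD') hxD hxD'
  · ext x
    simp only [Set.mem_iUnion]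
    constructor
    · intro hxA
      by_cases hxU : x ∈ ⋃₀ 𝒟
      · obtain ⟨D, hD, hxD⟩ := hxU
        have : x ∈ ⋃ n, F D n := by rw [← (hFs D hD).2]; exact ⟨hxA, hxD⟩
        obtain ⟨m, hm⟩ := Set.mem_iUnion.mp this
        exact ⟨m + 1, Set.mem_iUnion.mpr ⟨D, Set.mem_iUnion.mpr ⟨hD, hm⟩⟩⟩
      · exact ⟨0, hxA, hxU⟩
    · rintro ⟨(_ | m), hx⟩
      · exact hx.1
      · simp only [Set.mem_iUnion] at hx
        obtain ⟨D, hD, hxF⟩ := hx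
        have : F D m ⊆ A ∩ D := by
          rw [(hFs D hD).2]
          exact Set.subset_iUnion _ m
        exact (this hxF).1
end

section
/- In any category base (X, C), the family B of all Baire sets is a σ-algebra of subsets of X: it contains X, is closed under complementation, and is closed under countable unions. -/
universe u

namespace CatBaseProof

variable {X : Type u}

open Classical in
/-- One step of the transfinite construction. -/
noncomputable def step (C : Set (Set X)) (T : Set X)
    (reg : (Cardinal.mk C).ord.ToType → Set X)
    (ξ : (Cardinal.mk C).ord.ToType)
    (ih : ∀ η, η < ξ → Set X) : Set X :=
  if h : ∃ B, B ∈ C ∧ B ⊆ reg ξ ∧ MeagerIn C (T ∩ B) ∧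
      ∀ η, ∀ hη : η < ξ, Disjoint B (ih η hη)
  then h.choose else ∅

noncomputable def Bf (C : Set (Set X)) (T : Set X)
    (reg : (Cardinal.mk C).ord.ToType → Set X) :
    (Cardinal.mk C).ord.ToType → Set X :=
  (IsWellFounded.wf (r := ((· < ·) : (Cardinal.mk C).ord.ToType →
      (Cardinal.mk C).ord.ToType → Prop))).fix (step C T reg)

lemma Bf_eq (C : Set (Set X)) (T : Set X)
    (reg : (Cardinal.mk C).ord.ToType → Set X) (ξ : (Cardinal.mk C).ord.ToType) :
    Bf C T reg ξ = step C T reg ξ (fun η _ => Bf C T reg η) :=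
  WellFounded.fix_eq _ _ _

lemma Bf_spec (C : Set (Set X)) (T : Set X)
    (reg : (Cardinal.mk C).ord.ToType → Set X) (ξ : (Cardinal.mk C).ord.ToType) :
    (Bf C T reg ξ ∈ C ∧ Bf C T reg ξ ⊆ reg ξ ∧ MeagerIn C (T ∩ Bf C T reg ξ) ∧
      ∀ η, η < ξ → Disjoint (Bf C T reg ξ) (Bf C T reg η)) ∨
    (Bf C T reg ξ = ∅ ∧
      ¬ ∃ B, B ∈ C ∧ B ⊆ reg ξ ∧ MeagerIn C (T ∩ B) ∧
        ∀ η, η < ξ → Disjoint B (Bf C T reg η)) := by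
  rw [Bf_eq]
  unfold step
  split
  case isTrue h =>
    exact Or.inl ⟨h.choose_spec.1, h.choose_spec.2.1, h.choose_spec.2.2.1,
      h.choose_spec.2.2.2⟩
  case isFalse h =>
    exact Or.inr ⟨rfl, h⟩

end CatBaseProof

section Aux2
variable {X : Type u}


variable {X : Type u}

lemma singular_mono {C : Set (Set X)} {S S' : Set X} (h : Singular C S) (hsub : S' ⊆ S) :
    Singular C S' := by
  intro A hA
  obtain ⟨B, hB, hBA, hdisj⟩ := h A hA
  exact ⟨B, hB, hBA, hdisj.mono_right hsub⟩

lemma singular_empty {C : Set (Set X)} : Singular C (∅ : Set X) :=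
  fun A hA => ⟨A, hA, subset_rfl, Set.disjoint_empty A⟩

lemma meager_empty {C : Set (Set X)} : MeagerIn C (∅ : Set X) :=
  ⟨fun _ => ∅, fun _ => singular_empty, by simp⟩

lemma meager_mono {C : Set (Set X)} {S S' : Set X} (h : MeagerIn C S) (hsub : S' ⊆ S) :
    MeagerIn C S' := by
  obtain ⟨f, hf, hS⟩ := h
  refine ⟨fun n => f n ∩ S', fun n => singular_mono (hf n) Set.inter_subset_left, ?_⟩
  rw [← Set.iUnion_inter, ← hS, Set.inter_eq_self_of_subset_right hsub]

lemma meager_iUnion {C : Set (Set X)} {f : ℕ → Set X} (h : ∀ n, MeagerIn C (f n)) :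
    MeagerIn C (⋃ n, f n) := by
  choose g hg hgeq using h
  refine ⟨fun k => g k.unpair.1 k.unpair.2, fun k => hg _ _, ?_⟩
  ext x
  simp only [Set.mem_iUnion]
  constructor
  · rintro ⟨n, hx⟩
    rw [hgeq n, Set.mem_iUnion] at hx
    obtain ⟨m, hm⟩ := hx
    refine ⟨Nat.pair n m, ?_⟩
    rw [Nat.unpair_pair]
    exact hm
  · rintro ⟨k, hk⟩
    refine ⟨k.unpair.1, ?_⟩
    rw [hgeq]
    exact Set.mem_iUnion.mpr ⟨k.unpair.2, hk⟩


end Aux2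

namespace CatBaseProof

lemma lemA {X : Type u} {C : Set (Set X)} (hCB : IsCategoryBase (Set.univ : Set X) C)
    (h0 : ∅ ∉ C) (T : Set X)
    (H : ∀ A ∈ C, ∃ B ∈ C, B ⊆ A ∧ MeagerIn C (T ∩ B)) :
    MeagerIn C T := by
  classical
  obtain ⟨e⟩ : Nonempty ((Cardinal.mk C).ord.ToType ≃ ↥C) := by
    rw [← Cardinal.eq, Cardinal.mk_toType, Cardinal.card_ord]
  set reg : (Cardinal.mk C).ord.ToType → Set X := fun ξ => ((e ξ : ↥C) : Set X)
    with hregdef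
  have hreg : ∀ ξ, reg ξ ∈ C := fun ξ => (e ξ).2
  set B : (Cardinal.mk C).ord.ToType → Set X := Bf C T reg with hBdef
  have spec : ∀ ξ, (B ξ ∈ C ∧ B ξ ⊆ reg ξ ∧ MeagerIn C (T ∩ B ξ) ∧
      ∀ η, η < ξ → Disjoint (B ξ) (B η)) ∨
      (B ξ = ∅ ∧ ¬ ∃ b, b ∈ C ∧ b ⊆ reg ξ ∧ MeagerIn C (T ∩ b) ∧
        ∀ η, η < ξ → Disjoint b (B η)) := fun ξ => Bf_spec C T reg ξ
  have hmem : ∀ ξ, B ξ ∈ C → B ξ ⊆ reg ξ ∧ MeagerIn C (T ∩ B ξ) ∧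
      ∀ η, η < ξ → Disjoint (B ξ) (B η) := by
    intro ξ hξ
    rcases spec ξ with h | h
    · exact ⟨h.2.1, h.2.2.1, h.2.2.2⟩
    · rw [h.1] at hξ; exact absurd hξ h0
  have hCorE : ∀ ξ, B ξ ∈ C ∨ B ξ = ∅ := by
    intro ξ; rcases spec ξ with h | h
    · exact Or.inl h.1
    · exact Or.inr h.1
  set D : Set (Set X) := {b | b ∈ C ∧ ∃ ξ, B ξ = b} with hD
  have hDmem : ∀ b, b ∈ D ↔ (b ∈ C ∧ ∃ ξ, B ξ = b) := fun b => Iff.rfl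
  have hDsub : D ⊆ C := fun b hb => ((hDmem b).mp hb).1
  have hDpair : D.Pairwise Disjoint := by
    intro b hb b' hb' hne
    obtain ⟨hbC, ξ, rfl⟩ := (hDmem b).mp hb
    obtain ⟨hb'C, η, rfl⟩ := (hDmem b').mp hb'
    rcases lt_trichotomy ξ η with h | h | h
    · exact ((hmem η hb'C).2.2 ξ h).symm
    · exact absurd (congrArg B h) hne
    · exact (hmem ξ hbC).2.2 η h
  set Dlt : (Cardinal.mk C).ord.ToType → Set (Set X) :=
    fun ξ => {b | b ∈ C ∧ ∃ η, η < ξ ∧ B η = b} with hDlt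
  have hDltmem : ∀ ξ b, b ∈ Dlt ξ ↔ (b ∈ C ∧ ∃ η, η < ξ ∧ B η = b) := fun ξ b => Iff.rfl
  have hDltD : ∀ ξ, Dlt ξ ⊆ D := by
    intro ξ b hb
    obtain ⟨hbC, η, _, hη⟩ := (hDltmem ξ b).mp hb
    exact (hDmem b).mpr ⟨hbC, η, hη⟩
  have hDltsub : ∀ ξ, Dlt ξ ⊆ C := fun ξ => (hDltD ξ).trans hDsub
  have hDltpair : ∀ ξ, (Dlt ξ).Pairwise Disjoint := fun ξ => hDpair.mono (hDltD ξ)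
  have hcard : ∀ ξ, Cardinal.mk (Dlt ξ) < Cardinal.mk C := by
    intro ξ
    have h1 : Dlt ξ ⊆ B '' {η | η < ξ} := by
      intro b hb
      obtain ⟨_, η, hη, hbη⟩ := (hDltmem ξ b).mp hb
      exact ⟨η, hη, hbη⟩
    calc Cardinal.mk (Dlt ξ) ≤ Cardinal.mk (B '' {η | η < ξ}) :=
          Cardinal.mk_le_mk_of_subset h1
      _ ≤ Cardinal.mk {η | η < ξ} := Cardinal.mk_image_le
      _ < Cardinal.mk C := Cardinal.mk_Iio_ord_toType ξ
  have hinv : ∀ ξ, B ξ = ∅ → ∃ F ∈ C, F ⊆ reg ξ ∩ ⋃₀ (Dlt ξ) := by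
    intro ξ hξ
    have hnP : ¬ ∃ b, b ∈ C ∧ b ⊆ reg ξ ∧ MeagerIn C (T ∩ b) ∧
        ∀ η, η < ξ → Disjoint b (B η) := by
      rcases spec ξ with h | h
      · rw [hξ] at h; exact absurd h.1 h0
      · exact h.2
    by_contra hno
    apply hnP
    rcases (Dlt ξ).eq_empty_or_nonempty with hemp | hne
    · obtain ⟨B', hB', hsub, hm⟩ := H (reg ξ) (hreg ξ)
      refine ⟨B', hB', hsub, hm, fun η hη => ?_⟩
      rcases hCorE η with h | h
      · exact absurd ((hDltmem ξ (B η)).mpr ⟨h, η, hη, rfl⟩)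
          (Set.eq_empty_iff_forall_notMem.mp hemp (B η))
      · rw [h]; exact Set.disjoint_empty B'
    · obtain ⟨B₀, hB₀, hB₀sub, hdisj⟩ := hCB.avoid (reg ξ) (hreg ξ) (Dlt ξ)
        (hDltsub ξ) hne (hDltpair ξ) (hcard ξ) hno
      obtain ⟨B', hB', hB'B, hm⟩ := H B₀ hB₀
      refine ⟨B', hB', hB'B.trans hB₀sub, hm, fun η hη => ?_⟩
      rcases hCorE η with h | h
      · exact (hdisj (B η) ((hDltmem ξ (B η)).mpr ⟨h, η, hη, rfl⟩)).mono_left hB'B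
      · rw [h]; exact Set.disjoint_empty B'
  have hdagger : ∀ E ∈ C, ∃ b ∈ D, ∃ F ∈ C, F ⊆ E ∩ b := by
    intro E hE
    set ξ := e.symm ⟨E, hE⟩ with hξdef
    have hregE : reg ξ = E := by
      rw [hregdef, hξdef]
      exact congrArg Subtype.val (e.apply_symm_apply ⟨E, hE⟩)
    rcases hCorE ξ with h | h
    · refine ⟨B ξ, (hDmem (B ξ)).mpr ⟨h, ξ, rfl⟩, B ξ, h, ?_⟩
      have hsub := (hmem ξ h).1
      rw [hregE] at hsub
      exact Set.subset_inter hsub subset_rfl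
    · obtain ⟨F₀, hF₀C, hF₀sub⟩ := hinv ξ h
      have hF₀ne : F₀.Nonempty :=
        Set.nonempty_iff_ne_empty.mpr (fun hh => h0 (hh ▸ hF₀C))
      have hDltne : (Dlt ξ).Nonempty := by
        obtain ⟨x, hx⟩ := hF₀ne
        obtain ⟨b, hb, -⟩ := (hF₀sub hx).2
        exact ⟨b, hb⟩
      obtain ⟨F', hF', E', hE'C, hE'sub⟩ := hCB.meet (reg ξ) (hreg ξ) (Dlt ξ)
        (hDltsub ξ) hDltne (hDltpair ξ) (hcard ξ) ⟨F₀, hF₀C, hF₀sub⟩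
      rw [hregE] at hE'sub
      exact ⟨F', hDltD ξ hF', E', hE'C, hE'sub⟩
  -- assemble meagerness of T
  have hTD : ∀ b, b ∈ D → MeagerIn C (T ∩ b) := by
    intro b hb
    obtain ⟨hbC, ξ, rfl⟩ := (hDmem b).mp hb
    exact (hmem ξ hbC).2.1
  choose g hg1 hg2 using hTD
  set U : ℕ → Set X := fun n => ⋃ (b : Set X) (hb : b ∈ D), g b hb n with hU
  have hgsub : ∀ b (hb : b ∈ D) n, g b hb n ⊆ T ∩ b := by
    intro b hb n
    rw [hg2 b hb]
    exact Set.subset_iUnion _ n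
  have hUsing : ∀ n, Singular C (U n) := by
    intro n E hE
    obtain ⟨b, hbD, F, hFC, hFsub⟩ := hdagger E hE
    obtain ⟨F', hF'C, hF'F, hF'disj⟩ := hg1 b hbD n F hFC
    refine ⟨F', hF'C, hF'F.trans (hFsub.trans Set.inter_subset_left), ?_⟩
    rw [Set.disjoint_left]
    intro x hxF' hxU
    rw [hU] at hxU
    simp only [Set.mem_iUnion] at hxU
    obtain ⟨b', hb', hxb'⟩ := hxU
    by_cases hbb : b' = b
    · subst hbb
      exact (Set.disjoint_left.mp hF'disj) hxF' hxb'
    · have h1 : x ∈ b := (hFsub (hF'F hxF')).2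
      have h2 : x ∈ b' := (hgsub b' hb' n hxb').2
      exact (Set.disjoint_left.mp (hDpair hb' hbD hbb)) h2 h1
  have hTdiff : Singular C (T \ ⋃₀ D) := by
    intro E hE
    obtain ⟨b, hbD, F, hFC, hFsub⟩ := hdagger E hE
    refine ⟨F, hFC, hFsub.trans Set.inter_subset_left, ?_⟩
    rw [Set.disjoint_left]
    intro x hxF hxT
    exact hxT.2 ⟨b, hbD, (hFsub hxF).2⟩
  refine ⟨fun n => Nat.casesOn n (T \ ⋃₀ D) U, fun n => ?_, ?_⟩
  · cases n with
    | zero => exact hTdiff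
    | succ m => exact hUsing m
  · ext x
    simp only [Set.mem_iUnion]
    constructor
    · intro hxT
      by_cases hx : x ∈ ⋃₀ D
      · obtain ⟨b, hbD, hxb⟩ := hx
        have hx2 : x ∈ ⋃ n, g b hbD n := by
          rw [← hg2 b hbD]; exact ⟨hxT, hxb⟩
        obtain ⟨m, hm⟩ := Set.mem_iUnion.mp hx2
        refine ⟨m + 1, ?_⟩
        show x ∈ U m
        rw [hU]
        simp only [Set.mem_iUnion]
        exact ⟨b, hbD, hm⟩
      · exact ⟨0, hxT, hx⟩
    · rintro ⟨n, hn⟩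
      cases n with
      | zero => exact hn.1
      | succ m =>
        have hn2 : x ∈ U m := hn
        rw [hU] at hn2
        simp only [Set.mem_iUnion] at hn2
        obtain ⟨b, hb, hxb⟩ := hn2
        exact (hgsub b hb m hxb).1


end CatBaseProof


namespace CatBaseProof

lemma lemArel {X : Type u} {C : Set (Set X)} (hCB : IsCategoryBase (Set.univ : Set X) C)
    (h0 : ∅ ∉ C) (hcard : 1 < Cardinal.mk C) (T A : Set X) (hA : A ∈ C)
    (H : ∀ B ∈ C, B ⊆ A → ∃ B' ∈ C, B' ⊆ B ∧ MeagerIn C (T ∩ B')) :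
    MeagerIn C (T ∩ A) := by
  classical
  apply lemA hCB h0
  intro E hE
  by_cases h : ∃ F ∈ C, F ⊆ E ∩ A
  · obtain ⟨F, hFC, hFsub⟩ := h
    obtain ⟨F', hF'C, hF'F, hm⟩ := H F hFC (hFsub.trans Set.inter_subset_right)
    refine ⟨F', hF'C, hF'F.trans (hFsub.trans Set.inter_subset_left), ?_⟩
    exact meager_mono hm (fun x hx => ⟨hx.1.1, hx.2⟩)
  · have hsing : Cardinal.mk ({A} : Set (Set X)) < Cardinal.mk C := by
      rw [Cardinal.mk_singleton]; exact hcard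
    have hAx : ¬ ∃ F ∈ C, F ⊆ E ∩ ⋃₀ ({A} : Set (Set X)) := by
      rwa [Set.sUnion_singleton]
    obtain ⟨B, hB, hBE, hdisj⟩ := hCB.avoid E hE {A}
      (Set.singleton_subset_iff.mpr hA) (Set.singleton_nonempty A)
      (Set.pairwise_singleton A Disjoint) hsing hAx
    refine ⟨B, hB, hBE, ?_⟩
    have hemp : (T ∩ A) ∩ B = ∅ := by
      have hd := hdisj A rfl
      rw [Set.eq_empty_iff_forall_notMem]
      intro x hx
      exact (Set.disjoint_left.mp hd) hx.2 hx.1.2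
    rw [hemp]
    exact meager_empty

end CatBaseProof

open CatBaseProof in
/-- In any category base `(X, C)` the family of Baire sets is a σ-algebra:
it contains `X`, is closed under complementation and under countable unions. -/
theorem baire_sets_sigma_algebra {X : Type u}
    (C : Set (Set X)) (hCB : IsCategoryBase (Set.univ : Set X) C) :
    BaireSet Set.univ C (Set.univ : Set X) ∧
    (∀ S : Set X, BaireSet Set.univ C S → BaireSet Set.univ C Sᶜ) ∧
    (∀ f : ℕ → Set X, (∀ n, BaireSet Set.univ C (f n)) →
      BaireSet Set.univ C (⋃ n, f n)) := by
  classical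
  refine ⟨?_, ?_, ?_⟩
  · -- univ is Baire
    intro A hA
    refine ⟨A, hA, subset_rfl, Or.inr ?_⟩
    have : (Set.univ \ Set.univ : Set X) ∩ A = ∅ := by simp
    rw [this]
    exact meager_empty
  · -- complement
    intro S h A hA
    obtain ⟨B, hB, hBA, hor⟩ := h A hA
    refine ⟨B, hB, hBA, ?_⟩
    rcases hor with hm | hm
    · right
      apply meager_mono hm
      intro x hx
      refine ⟨?_, hx.2⟩
      have := hx.1.2
      rw [Set.mem_compl_iff, not_not] at this
      exact this
    · left
      apply meager_mono hm
      intro x hx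
      exact ⟨⟨trivial, hx.1⟩, hx.2⟩
  · -- countable unions
    intro f hf A hA
    by_cases h0 : ∅ ∈ C
    · exact ⟨∅, h0, Set.empty_subset A,
        Or.inl (by rw [Set.inter_empty]; exact meager_empty)⟩
    by_cases hcard : 1 < Cardinal.mk C
    · by_cases h1 : ∃ B ∈ C, B ⊆ A ∧ MeagerIn C ((⋃ n, f n) ∩ B)
      · obtain ⟨B, hB, hBA, hm⟩ := h1
        exact ⟨B, hB, hBA, Or.inl hm⟩
      · push_neg at h1
        by_cases h2 : ∃ B' ∈ C, B' ⊆ A ∧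
            ∀ B₃ ∈ C, B₃ ⊆ B' → ¬ MeagerIn C ((⋃ n, f n)ᶜ ∩ B₃)
        · exfalso
          obtain ⟨B', hB', hB'A, hB'prop⟩ := h2
          have hn : ∀ n, MeagerIn C (f n ∩ B') := by
            intro n
            apply lemArel hCB h0 hcard (f n) B' hB'
            intro B'' hB'' hB''B'
            obtain ⟨B₃, hB₃, hB₃B'', hor⟩ := hf n B'' hB''
            refine ⟨B₃, hB₃, hB₃B'', ?_⟩
            rcases hor with h | h
            · exact h
            · exfalso
              apply hB'prop B₃ hB₃ (hB₃B''.trans hB''B')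
              apply meager_mono h
              intro x hx
              exact ⟨⟨trivial, fun hxS => hx.1 (Set.mem_iUnion.mpr ⟨n, hxS⟩)⟩, hx.2⟩
          have hm : MeagerIn C ((⋃ n, f n) ∩ B') := by
            apply meager_mono (meager_iUnion hn)
            intro x hx
            obtain ⟨n, hxn⟩ := Set.mem_iUnion.mp hx.1
            exact Set.mem_iUnion.mpr ⟨n, hxn, hx.2⟩
          exact h1 B' hB' hB'A hm
        · push_neg at h2
          have hm := lemArel hCB h0 hcard (⋃ n, f n)ᶜ A hA h2
          refine ⟨A, hA, subset_rfl, Or.inr ?_⟩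
          apply meager_mono hm
          intro x hx
          exact ⟨hx.1.2, hx.2⟩
    · -- C is subsingleton
      have hsub : C.Subsingleton :=
        Cardinal.mk_le_one_iff_set_subsingleton.mp (not_lt.mp hcard)
      by_cases hn : ∃ n, MeagerIn C ((Set.univ \ f n) ∩ A)
      · obtain ⟨n, hm⟩ := hn
        refine ⟨A, hA, subset_rfl, Or.inr (meager_mono hm ?_)⟩
        intro x hx
        exact ⟨⟨trivial, fun hxn => hx.1.2 (Set.mem_iUnion.mpr ⟨n, hxn⟩)⟩, hx.2⟩
      · push_neg at hn
        have hall2 : ∀ n, MeagerIn C (f n ∩ A) := by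
          intro n
          obtain ⟨B, hB, hBA, hor⟩ := hf n A hA
          have hBA' : B = A := hsub hB hA
          subst hBA'
          rcases hor with h | h
          · exact h
          · exact absurd h (hn n)
        refine ⟨A, hA, subset_rfl, Or.inl ?_⟩
        apply meager_mono (meager_iUnion hall2)
        intro x hx
        obtain ⟨n, hxn⟩ := Set.mem_iUnion.mp hx.1
        exact Set.mem_iUnion.mpr ⟨n, hxn, hx.2⟩
end

section
/- (Hejduk) Let (X, S) be a category base and let M(S) be the σ-ideal of all meager sets of (X, S). Assume: (1) for every cardinal α < card(X), the family M(S) is α-additive, i.e., closed under unions of any α-indexed sequence of its members; (2) there exists a base P of M(S) (a subfamily P ⊆ M(S) such that every member of M(S) is contained in some member of P) of cardinality not greater than that of X. If X ∉ M(S), then for every family {X_t}_{t∈T} of meager sets forming a partition of X, there exists a set T′ ⊆ T such that ⋃_{t∈T′} X_t is not a Baire set. -/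
universe u

/-!
Suppose every union of pieces of the partition is a Baire set, and let `κ = #X`. The
additivity of the meager ideal and its base `(q i)_{i < κ}` force `κ` to be regular. By
Banach's category theorem some region `W` has no meager subregion; rank each piece `X_t` by
the least `i` with `X_t ∩ W ⊆ q i`. The ranks are cofinal in `κ`, so they carry an almost
disjoint family `𝒜` of more than `κ` cofinal sets. For `a ∈ 𝒜` the union `U_a` of the pieces
with rank in `a` is a Baire set that is not meager in `W`, so some region `B_a ⊆ W` lies in
`U_a` up to a meager set. For `a ≠ b` the set `U_a ∩ U_b ∩ W` is covered by boundedly many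
`q i`, hence meager, so `B_a` and `B_b` share no subregion. Morgan's axiom lets one shrink such
regions, along a well-ordering, to pairwise disjoint ones, and more than `κ` disjoint nonempty
sets cannot fit in `X`.
-/

open Cardinal Set Function

theorem exists_transfinite_seq {α β : Type*} [LinearOrder α] [WellFoundedLT α] [Nonempty β]
    (Q : (x : α) → (Iio x → β) → β → Prop)
    (step : ∀ x (g : Iio x → β),
      (∀ y : Iio x, Q y (fun z => g ⟨z, lt_trans z.2 y.2⟩) (g y)) → ∃ b, Q x g b) :
    ∃ f : α → β, ∀ x, Q x (fun y => f y) (f x) := by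
  classical
  let f : α → β := IsWellFounded.fix (· < ·) fun x prev =>
    if h : ∀ y : Iio x, Q y (fun z => prev z (lt_trans z.2 y.2)) (prev y y.2) then
      (step x (fun y => prev y y.2) h).choose
    else Classical.arbitrary β
  refine ⟨f, fun x => ?_⟩
  induction x using WellFoundedLT.induction with
  | _ x ih =>
  have hfix : f x = _ := IsWellFounded.fix_eq _ _ x
  rw [hfix]
  split_ifs with h
  · exact Exists.choose_spec _
  · exact (h fun y => ih y y.2).elim

theorem Pairwise.biUnion_inter_biUnion_subset {ι α : Type*} {f : ι → Set α}
    (h : Pairwise (Disjoint on f)) (s t : Set ι) :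
    (⋃ i ∈ s, f i) ∩ (⋃ i ∈ t, f i) ⊆ ⋃ i ∈ s ∩ t, f i := by
  rintro x ⟨hxs, hxt⟩
  obtain ⟨i, his, hxi⟩ := mem_iUnion₂.1 hxs
  obtain ⟨j, hjt, hxj⟩ := mem_iUnion₂.1 hxt
  obtain rfl : i = j := by_contra fun hij => disjoint_left.1 (h hij) hxi hxj
  exact mem_iUnion₂.2 ⟨i, ⟨his, hjt⟩, hxi⟩

namespace Cardinal

variable {c : Cardinal.{u}}

theorem mk_lt_of_bddAbove (hc : ℵ₀ ≤ c) {s : Set c.ord.ToType} (hs : BddAbove s) : #s < c := by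
  obtain ⟨b, hb⟩ := hs
  calc #s ≤ #(Iic b) := mk_le_mk_of_subset fun _ hx => hb hx
    _ < #c.ord.ToType := mk_Iic_lt b (by simp) (by simpa)
    _ = c := mk_ord_toType c

namespace IsRegular

theorem bddAbove_of_mk_lt (hc : c.IsRegular) {s : Set c.ord.ToType} (hs : #s < c) :
    BddAbove s := by
  refine BddAbove.of_not_isCofinal fun hcof => (Order.cof_le hcof).not_gt ?_
  rwa [Ordinal.cof_toType, hc.cof_ord]

theorem mk_eq_of_isCofinal (hc : c.IsRegular) {s : Set c.ord.ToType} (hs : IsCofinal s) :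
    #s = c := by
  refine le_antisymm ((mk_set_le s).trans_eq (mk_ord_toType c)) ?_
  have := Order.cof_le hs
  rwa [Ordinal.cof_toType, hc.cof_ord] at this

theorem bddAbove_iUnion (hc : c.IsRegular) {ι : Type u} (hι : #ι < c)
    {s : ι → Set c.ord.ToType} (hs : ∀ i, BddAbove (s i)) : BddAbove (⋃ i, s i) := by
  choose b hb using hs
  obtain ⟨B, hB⟩ := hc.bddAbove_of_mk_lt (s := range b) (mk_range_le.trans_lt hι)
  exact ⟨B, iUnion_subset fun i _ hx => (hb i hx).trans (hB (mem_range_self i))⟩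

theorem exists_isCofinal_bddAbove_inter (hc : c.IsRegular) {𝒜 : Set (Set c.ord.ToType)}
    (h𝒜c : #𝒜 = c) (h𝒜 : ∀ a ∈ 𝒜, IsCofinal a)
    (h𝒜𝒜 : 𝒜.Pairwise fun a b => BddAbove (a ∩ b)) :
    ∃ a ⊆ ⋃₀ 𝒜, IsCofinal a ∧ ∀ b ∈ 𝒜, BddAbove (a ∩ b) := by
  have := noMaxOrder hc.aleph0_le
  obtain ⟨e⟩ : Nonempty (c.ord.ToType ≃ 𝒜) := Cardinal.eq.1 ((mk_ord_toType c).trans h𝒜c.symm)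
  have hpick (x) : ∃ z ∈ (e x : Set _), x ≤ z ∧ ∀ i < x, z ∉ (e i : Set _) := by
    obtain ⟨b, hb⟩ := hc.bddAbove_iUnion ((mk_Iio_lt x (by simp)).trans_eq (mk_ord_toType c))
      (s := fun i : Iio x => (e i : Set _) ∩ e x) fun i =>
        h𝒜𝒜 (e i).2 (e x).2 (Subtype.coe_injective.ne (e.injective.ne (ne_of_lt i.2)))
    obtain ⟨y, hy⟩ := exists_gt (max b x)
    obtain ⟨z, hz, hyz⟩ := h𝒜 _ (e x).2 y
    refine ⟨z, hz, (le_max_right _ _).trans (hy.trans_le hyz).le, fun i hi hzi => ?_⟩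
    exact (hy.trans_le hyz).not_ge ((hb (mem_iUnion.2 ⟨⟨i, hi⟩, hzi, hz⟩)).trans (le_max_left _ _))
  -- `f x` avoids every earlier `e i`, so `range f ∩ e i ⊆ f '' Iic i`.
  choose f hfe hxf hfe' using hpick
  refine ⟨range f, range_subset_iff.2 fun x => ⟨_, (e x).2, hfe x⟩,
    fun x => ⟨f x, mem_range_self x, hxf x⟩, fun b hb => ?_⟩
  obtain ⟨i, rfl⟩ : ∃ i, (e i : Set _) = b := ⟨e.symm ⟨b, hb⟩, by simp⟩
  refine (hc.bddAbove_of_mk_lt (s := f '' Iic i)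
    (mk_image_le.trans_lt (mk_lt_of_bddAbove hc.aleph0_le bddAbove_Iic))).mono ?_
  rintro _ ⟨⟨x, rfl⟩, hxi⟩
  exact ⟨x, not_lt.1 fun hix => hfe' x i hix hxi, rfl⟩

theorem exists_pairwise_disjoint_isCofinal (hc : c.IsRegular) {s : Set c.ord.ToType}
    (hs : IsCofinal s) :
    ∃ A : c.ord.ToType → Set c.ord.ToType,
      (∀ i, A i ⊆ s ∧ IsCofinal (A i)) ∧ Pairwise (Disjoint on A) := by
  have := noMaxOrder hc.aleph0_le
  obtain ⟨e⟩ : Nonempty (s ≃ c.ord.ToType × c.ord.ToType) := Cardinal.eq.1 (by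
    rw [hc.mk_eq_of_isCofinal hs, mk_prod, lift_id, mk_ord_toType, mul_eq_self hc.aleph0_le])
  let P (i : c.ord.ToType) : Set c.ord.ToType := {z | ∃ h : z ∈ s, (e ⟨z, h⟩).1 = i}
  refine ⟨P, fun i => ⟨fun z ⟨h, _⟩ => h, ?_⟩,
    fun i j hij => disjoint_left.2 fun z ⟨_, hi⟩ ⟨_, hj⟩ => hij (hi ▸ hj ▸ rfl)⟩
  have hinj : Injective fun j => (⟨e.symm (i, j), (e.symm (i, j)).2, by simp⟩ : P i) :=
    fun j j' h => by
      have h' : (e.symm (i, j) : c.ord.ToType) = e.symm (i, j') :=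
        congrArg (fun z : P i => (z : c.ord.ToType)) h
      simpa using e.symm.injective (Subtype.ext h')
  by_contra hcof
  refine (mk_lt_of_bddAbove hc.aleph0_le (not_isCofinal_iff_bddAbove.1 hcof)).not_ge ?_
  exact (mk_ord_toType c).symm.trans_le (mk_le_of_injective hinj)

theorem exists_almostDisjoint_isCofinal (hc : c.IsRegular) {s : Set c.ord.ToType}
    (hs : IsCofinal s) :
    ∃ 𝒜 : Set (Set c.ord.ToType), c < #𝒜 ∧ (∀ a ∈ 𝒜, a ⊆ s ∧ IsCofinal a) ∧
      𝒜.Pairwise fun a b => BddAbove (a ∩ b) := by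
  have := noMaxOrder hc.aleph0_le
  have : Nonempty c.ord.ToType := Ordinal.nonempty_toType_iff.2 hc.ord_pos.ne'
  obtain ⟨A, hA, hAA⟩ := hc.exists_pairwise_disjoint_isCofinal hs
  have hA_inj : Injective A := fun i j hij => by_contra fun h => by
    have : Disjoint (A i) (A j) := hAA h
    rw [← hij, disjoint_self] at this
    exact (hA i).2.nonempty.ne_empty this
  -- Families containing the `c` pieces `A i` have at least `c` members, so a maximal one with at
  -- most `c` members can be enumerated by `c.ord.ToType` and then diagonalised.
  let 𝔉 : Set (Set (Set c.ord.ToType)) := {𝒜 | range A ⊆ 𝒜 ∧ (∀ a ∈ 𝒜, a ⊆ s ∧ IsCofinal a) ∧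
    𝒜.Pairwise fun a b => BddAbove (a ∩ b)}
  obtain ⟨𝒜, -, h𝒜⟩ := zorn_subset_nonempty 𝔉
    (fun 𝒞 h𝒞 hchain ⟨𝒜₀, h𝒜₀⟩ => ⟨⋃₀ 𝒞,
      ⟨(h𝒞 h𝒜₀).1.trans (subset_sUnion_of_mem h𝒜₀), fun a ⟨𝒜, h𝒜, ha⟩ => (h𝒞 h𝒜).2.1 a ha,
        (pairwise_sUnion hchain.directedOn).2 fun 𝒜 h𝒜 => (h𝒞 h𝒜).2.2⟩,
      fun _ => subset_sUnion_of_mem⟩)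
    (range A) ⟨subset_rfl, forall_mem_range.2 hA,
      (hAA.mono fun i j h => show BddAbove (A i ∩ A j) by simp [h.inter_eq]).range_pairwise⟩
  refine ⟨𝒜, lt_of_not_ge fun h𝒜c => ?_, h𝒜.prop.2⟩
  have hc𝒜 : c ≤ #𝒜 :=
    calc c = #(range A) := ((mk_range_eq A hA_inj).trans (mk_ord_toType c)).symm
      _ ≤ #𝒜 := mk_le_mk_of_subset h𝒜.prop.1
  obtain ⟨a, has, ha, ha𝒜⟩ := hc.exists_isCofinal_bddAbove_inter (le_antisymm h𝒜c hc𝒜)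
    (fun b hb => (h𝒜.prop.2.1 b hb).2) h𝒜.prop.2.2
  have hins : insert a 𝒜 ∈ 𝔉 := by
    refine ⟨h𝒜.prop.1.trans (subset_insert _ _), forall_mem_insert.2 ⟨⟨?_, ha⟩, h𝒜.prop.2.1⟩,
      pairwise_insert.2 ⟨h𝒜.prop.2.2, fun b hb _ => ⟨ha𝒜 b hb, inter_comm a b ▸ ha𝒜 b hb⟩⟩⟩
    exact has.trans (sUnion_subset fun b hb => (h𝒜.prop.2.1 b hb).1)
  have ha_mem : a ∈ 𝒜 := h𝒜.2 hins (subset_insert _ _) (mem_insert a 𝒜)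
  exact not_isCofinal_iff_bddAbove.2 (by simpa using ha𝒜 a ha_mem) ha

end IsRegular

end Cardinal

section Meager

variable {X : Type u} {C : Set (Set X)}

theorem Singular.mono {s t : Set X} (h : Singular C s) (hts : t ⊆ s) : Singular C t :=
  fun A hA =>
    let ⟨B, hB, hBA, hBs⟩ := h A hA
    ⟨B, hB, hBA, hBs.mono_right hts⟩

theorem Singular.meagerIn {s : Set X} (h : Singular C s) : MeagerIn C s :=
  ⟨fun _ => s, fun _ => h, (iUnion_const s).symm⟩

theorem meagerIn_empty : MeagerIn C (∅ : Set X) :=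
  Singular.meagerIn fun A hA => ⟨A, hA, subset_rfl, disjoint_empty A⟩

theorem MeagerIn.mono {s t : Set X} (h : MeagerIn C s) (hts : t ⊆ s) : MeagerIn C t := by
  obtain ⟨f, hf, rfl⟩ := h
  refine ⟨fun n => f n ∩ t, fun n => (hf n).mono inter_subset_left, ?_⟩
  rw [← iUnion_inter, inter_eq_right.2 hts]

theorem MeagerIn.iUnion {ι : Type*} [Countable ι] {s : ι → Set X} (h : ∀ i, MeagerIn C (s i)) :
    MeagerIn C (⋃ i, s i) := by
  cases isEmpty_or_nonempty ι
  · simpa using meagerIn_empty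
  choose f hf hfs using h
  obtain ⟨g, hg⟩ := exists_surjective_nat (ι × ℕ)
  refine ⟨fun n => f (g n).1 (g n).2, fun n => hf _ _, ?_⟩
  rw [hg.iUnion_comp (fun p => f p.1 p.2), iUnion_prod']
  simp_rw [hfs]

theorem MeagerIn.union {s t : Set X} (hs : MeagerIn C s) (ht : MeagerIn C t) :
    MeagerIn C (s ∪ t) := by
  rw [union_eq_iUnion]
  exact MeagerIn.iUnion (Bool.forall_bool.2 ⟨ht, hs⟩)

theorem exists_enum_of_meagerIn_base {κ : Cardinal.{u}}
    (hbase : ∃ P : Set (Set X), (∀ p ∈ P, MeagerIn C p) ∧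
      (∀ M : Set X, MeagerIn C M → ∃ p ∈ P, M ⊆ p) ∧ #P ≤ κ) :
    ∃ q : κ.ord.ToType → Set X, (∀ i, MeagerIn C (q i)) ∧ ∀ M, MeagerIn C M → ∃ i, M ⊆ q i := by
  obtain ⟨P, hPm, hPbase, hPκ⟩ := hbase
  have : Nonempty P :=
    let ⟨p, hp, _⟩ := hPbase ∅ meagerIn_empty
    ⟨⟨p, hp⟩⟩
  obtain ⟨j⟩ : Nonempty (P ↪ κ.ord.ToType) := by rwa [← Cardinal.le_def, mk_ord_toType]
  refine ⟨fun i => ((invFun j i : P) : Set X), fun i => hPm _ (invFun j i).2, fun M hM => ?_⟩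
  obtain ⟨p, hp, hMp⟩ := hPbase M hM
  obtain ⟨i, hi⟩ := invFun_surjective j.injective ⟨p, hp⟩
  exact ⟨i, by simpa [hi] using hMp⟩

theorem isRegular_of_meagerIn_iUnion {κ : Cardinal.{u}} (hκ : ℵ₀ ≤ κ)
    (hadd : ∀ (ι : Type u) (f : ι → Set X), #ι < κ →
      (∀ i, MeagerIn C (f i)) → MeagerIn C (⋃ i, f i))
    {q : κ.ord.ToType → Set X} (hq : ∀ i, MeagerIn C (q i)) (hcov : ∀ x, ∃ i, x ∈ q i)
    (hX : ¬MeagerIn C (Set.univ : Set X)) : κ.IsRegular := by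
  refine ⟨hκ, ?_⟩
  rw [← Ordinal.cof_toType, Order.le_cof_iff]
  intro s hs
  by_contra! hsκ
  refine hX ((hadd s (fun i => ⋃ j : Iic i.1, q j) hsκ fun i =>
    hadd _ _ (mk_lt_of_bddAbove hκ bddAbove_Iic) fun j => hq j).mono fun x _ => ?_)
  obtain ⟨j, hj⟩ := hcov x
  obtain ⟨i, his, hji⟩ := hs j
  exact mem_iUnion.2 ⟨⟨i, his⟩, mem_iUnion.2 ⟨⟨j, hji⟩, hj⟩⟩

end Meager

def SharesSubregion {X : Type u} (C : Set (Set X)) (A B : Set X) : Prop :=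
  ∃ E ∈ C, E ⊆ A ∩ B

namespace IsCategoryBase

variable {X : Type u} {Y : Set X} {C : Set (Set X)}

theorem exists_sharesSubregion_or_disjoint (hCB : IsCategoryBase Y C) {A : Set X} (hA : A ∈ C)
    {D : Set (Set X)} (hDC : D ⊆ C) (hD : D.Pairwise Disjoint) (hDcard : #D < #C) :
    (∃ F ∈ D, SharesSubregion C A F) ∨ ∃ B ∈ C, B ⊆ A ∧ ∀ F ∈ D, Disjoint B F := by
  rcases D.eq_empty_or_nonempty with rfl | hDne
  · exact .inr ⟨A, hA, subset_rfl, fun F hF => hF.elim⟩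
  by_cases h : ∃ E ∈ C, E ⊆ A ∩ ⋃₀ D
  · exact .inl (hCB.meet A hA D hDC hDne hD hDcard h)
  · exact .inr (hCB.avoid A hA D hDC hDne hD hDcard h)

theorem sharesSubregion_or_exists_disjoint (hCB : IsCategoryBase Y C) {A W : Set X} (hA : A ∈ C)
    (hW : W ∈ C) : SharesSubregion C A W ∨ ∃ B ∈ C, B ⊆ A ∧ Disjoint B W := by
  by_cases h : SharesSubregion C A W
  · exact .inl h
  have hAW : A ≠ W := by
    rintro rfl
    exact h ⟨A, hA, by simp⟩
  have hcard : #({W} : Set (Set X)) < #C := by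
    rw [mk_singleton, one_lt_iff_nontrivial]
    exact nontrivial_of_ne ⟨A, hA⟩ ⟨W, hW⟩ (by simpa using hAW)
  refine .inr ?_
  rcases hCB.exists_sharesSubregion_or_disjoint hA (singleton_subset_iff.2 hW)
    (pairwise_singleton _ _) hcard with ⟨F, rfl, hF⟩ | ⟨B, hB, hBA, hBW⟩
  · exact (h hF).elim
  · exact ⟨B, hB, hBA, hBW W rfl⟩

theorem exists_sharesSubregion_or_exists_mem_disjoint (hCB : IsCategoryBase Y C)
    {R : Set (Set X)} (hRC : R ⊆ C) (hR : ∀ B ∈ R, ∀ A ∈ C, A ⊆ B → A ∈ R) {A : Set X}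
    (hA : ∃ B ∈ R, B ⊆ A) {P : Set (Set X)} (hPR : P ⊆ R) (hP : P.Pairwise Disjoint)
    (hPcard : #P < #C) :
    (∃ F ∈ P, SharesSubregion C A F) ∨ ∃ B ∈ R, B ⊆ A ∧ ∀ F ∈ P, Disjoint B F := by
  obtain ⟨B₀, hB₀R, hB₀A⟩ := hA
  refine (hCB.exists_sharesSubregion_or_disjoint (hRC hB₀R) (hPR.trans hRC) hP hPcard).imp ?_ ?_
  · exact fun ⟨F, hF, E, hE, hEB₀F⟩ => ⟨F, hF, E, hE, hEB₀F.trans (inter_subset_inter_left _ hB₀A)⟩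
  · exact fun ⟨B, hB, hBB₀, hBP⟩ => ⟨B, hR B₀ hB₀R B hB hBB₀, hBB₀.trans hB₀A, hBP⟩

theorem exists_pairwiseDisjoint_sharesSubregion (hCB : IsCategoryBase Y C) {R : Set (Set X)}
    (hRC : R ⊆ C) (hR : ∀ B ∈ R, ∀ A ∈ C, A ⊆ B → A ∈ R) :
    ∃ D ⊆ R, D.Pairwise Disjoint ∧
      ∀ A ∈ C, (∃ B ∈ R, B ⊆ A) → ∃ F ∈ D, SharesSubregion C A F := by
  -- Run through the regions `e x` in order type `#C`, so that fewer than `#C` sets have been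
  -- chosen before each stage, as Morgan's axiom requires. At stage `x`, if `e x` contains a
  -- member of `R`, either it shares a subregion with an earlier choice or some member of `R`
  -- inside it avoids all earlier choices, and that member is chosen.
  obtain ⟨e⟩ : Nonempty ((#C).ord.ToType ≃ C) := Cardinal.eq.1 (mk_ord_toType _)
  let Q (x : (#C).ord.ToType) (g : Iio x → Set X) (b : Set X) : Prop :=
    (b = ∅ ∨ b ∈ R) ∧ (∀ y, Disjoint (g y) b) ∧
      ((∃ B ∈ R, B ⊆ e x) → b ∈ R ∧ b ⊆ e x ∨ ∃ y, g y ∈ R ∧ SharesSubregion C (e x) (g y))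
  have step (x) (g : Iio x → Set X)
      (hg : ∀ y : Iio x, Q y (fun z => g ⟨z, lt_trans z.2 y.2⟩) (g y)) : ∃ b, Q x g b := by
    have hg' : Pairwise (Disjoint on g) :=
      (Std.Symm.pairwise_on g).2 fun y' y h => (hg y).2.1 ⟨y', h⟩
    have hPcard : #(range g ∩ R : Set (Set X)) < #C :=
      ((mk_le_mk_of_subset inter_subset_left).trans mk_range_le).trans_lt
        ((mk_Iio_lt x (by simp)).trans_eq (mk_ord_toType _))
    by_cases hx : ∃ B ∈ R, B ⊆ e x
    swap
    · exact ⟨∅, .inl rfl, fun _ => disjoint_empty _, fun h => (hx h).elim⟩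
    rcases hCB.exists_sharesSubregion_or_exists_mem_disjoint hRC hR hx inter_subset_right
      (hg'.range_pairwise.mono inter_subset_left) hPcard
      with ⟨_, ⟨⟨y, rfl⟩, hy⟩, hxy⟩ | ⟨B, hBR, hBx, hBP⟩
    · exact ⟨∅, .inl rfl, fun _ => disjoint_empty _, fun _ => .inr ⟨y, hy, hxy⟩⟩
    refine ⟨B, .inr hBR, fun y => ?_, fun _ => .inl ⟨hBR, hBx⟩⟩
    rcases (hg y).1 with h | h
    · rw [h]
      exact empty_disjoint B
    · exact (hBP _ ⟨mem_range_self y, h⟩).symm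
  obtain ⟨F, hF⟩ := exists_transfinite_seq Q step
  have hdisj : Pairwise (Disjoint on F) :=
    (Std.Symm.pairwise_on F).2 fun y x hyx => (hF x).2.1 ⟨y, hyx⟩
  refine ⟨range F ∩ R, inter_subset_right, hdisj.range_pairwise.mono inter_subset_left,
    fun A hA hAR => ?_⟩
  obtain ⟨hFx, hFxA⟩ | ⟨y, hy, hAy⟩ := (hF (e.symm ⟨A, hA⟩)).2.2 (by simpa using hAR)
  · exact ⟨_, ⟨mem_range_self _, hFx⟩, _, hRC hFx, subset_inter (by simpa using hFxA) subset_rfl⟩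
  · exact ⟨_, ⟨mem_range_self _, hy⟩, by simpa using hAy⟩

theorem meagerIn_of_forall_exists_subregion (hCB : IsCategoryBase Y C) {G : Set X}
    (h : ∀ A ∈ C, ∃ B ∈ C, B ⊆ A ∧ MeagerIn C (G ∩ B)) : MeagerIn C G := by
  obtain ⟨D, hDR, hD, hDA⟩ := hCB.exists_pairwiseDisjoint_sharesSubregion
    (R := {B ∈ C | MeagerIn C (G ∩ B)}) (fun B hB => hB.1)
    (fun B hB A hA hAB => ⟨hA, hB.2.mono (inter_subset_inter_right G hAB)⟩)
  replace hDA : ∀ A ∈ C, ∃ F ∈ D, SharesSubregion C A F := fun A hA =>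
    hDA A hA (let ⟨B, hB, hBA, hGB⟩ := h A hA; ⟨B, ⟨hB, hGB⟩, hBA⟩)
  choose s hs hGs using fun F : D => (hDR F.2).2
  have hout : Singular C (G \ ⋃₀ D) := fun A hA => by
    obtain ⟨F, hF, E, hE, hEAF⟩ := hDA A hA
    exact ⟨E, hE, fun z hz => (hEAF hz).1,
      disjoint_left.2 fun z hz hzG => hzG.2 ⟨F, hF, (hEAF hz).2⟩⟩
  have hin : ∀ n, Singular C (⋃ F : D, s F n ∩ F) := fun n A hA => by
    obtain ⟨F, hF, E, hE, hEAF⟩ := hDA A hA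
    obtain ⟨B, hB, hBE, hBs⟩ := hs ⟨F, hF⟩ n E hE
    refine ⟨B, hB, hBE.trans fun z hz => (hEAF hz).1, disjoint_iUnion_right.2 fun F' => ?_⟩
    by_cases hFF' : (F' : Set X) = F
    · obtain rfl : F' = ⟨F, hF⟩ := Subtype.ext hFF'
      exact hBs.mono_right inter_subset_left
    · exact ((hD hF F'.2 (Ne.symm hFF')).mono_left
        (hBE.trans fun z hz => (hEAF hz).2)).mono_right inter_subset_right
  refine (hout.meagerIn.union (MeagerIn.iUnion fun n => (hin n).meagerIn)).mono fun z hz => ?_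
  by_cases hzD : z ∈ ⋃₀ D
  · obtain ⟨F, hF, hzF⟩ := hzD
    have hzGF : z ∈ G ∩ F := ⟨hz, hzF⟩
    rw [hGs ⟨F, hF⟩] at hzGF
    obtain ⟨n, hn⟩ := mem_iUnion.1 hzGF
    exact .inr (mem_iUnion.2 ⟨n, mem_iUnion.2 ⟨⟨F, hF⟩, hn, hzF⟩⟩)
  · exact .inl ⟨hz, hzD⟩

theorem mk_le_of_pairwise_not_sharesSubregion (hCB : IsCategoryBase Y C) (hne : ∅ ∉ C)
    {ι : Type u} {A : ι → Set X} (hA : ∀ i, A i ∈ C)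
    (hAA : Pairwise fun i j => ¬SharesSubregion C (A i) (A j)) : #ι ≤ #X := by
  obtain ⟨D, hDR, hD, hDA⟩ := hCB.exists_pairwiseDisjoint_sharesSubregion
    (R := {B ∈ C | ∃ i, B ⊆ A i}) (fun B hB => hB.1)
    (fun B ⟨_, i, hBi⟩ E hE hEB => ⟨hE, i, hEB.trans hBi⟩)
  have hF (i) : ∃ F ∈ D, F ⊆ A i := by
    obtain ⟨F, hFD, E, hE, hEiF⟩ := hDA (A i) (hA i) ⟨A i, ⟨hA i, i, subset_rfl⟩, subset_rfl⟩
    obtain ⟨-, j, hFj⟩ := hDR hFD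
    obtain rfl : i = j := by_contra fun hij =>
      hAA hij ⟨E, hE, fun z hz => ⟨(hEiF hz).1, hFj (hEiF hz).2⟩⟩
    exact ⟨F, hFD, hFj⟩
  choose F hFD hFA using hF
  have hFne (i) : (F i).Nonempty := nonempty_iff_ne_empty.2 fun h => hne (h ▸ (hDR (hFD i)).1)
  choose p hp using hFne
  refine mk_le_of_injective (f := p) fun i j hij => by_contra fun hij' => ?_
  have hFij : F i = F j := by_contra fun h =>
    disjoint_left.1 (hD (hFD i) (hFD j) h) (hp i) (hij ▸ hp j)
  exact hAA hij' ⟨F i, (hDR (hFD i)).1, subset_inter (hFA i) (hFij ▸ hFA j)⟩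

theorem exists_subregion_meagerIn_diff (hCB : IsCategoryBase Y C) {U W : Set X}
    (hU : BaireSet Y C U) (hW : W ∈ C) (hUW : ¬MeagerIn C (U ∩ W)) :
    ∃ B ∈ C, B ⊆ W ∧ MeagerIn C ((Y \ U) ∩ B) := by
  by_contra! h
  refine hUW (hCB.meagerIn_of_forall_exists_subregion fun A hA => ?_)
  rcases hCB.sharesSubregion_or_exists_disjoint hA hW with ⟨E, hE, hEAW⟩ | ⟨B, hB, hBA, hBW⟩
  · obtain ⟨B, hB, hBE, hUB | hUB⟩ := hU E hE
    · exact ⟨B, hB, hBE.trans fun z hz => (hEAW hz).1,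
        hUB.mono (inter_subset_inter_left _ inter_subset_left)⟩
    · exact (h B hB (hBE.trans fun z hz => (hEAW hz).2) hUB).elim
  · exact ⟨B, hB, hBA, meagerIn_empty.mono fun z hz => (disjoint_left.1 hBW hz.2 hz.1.2).elim⟩

theorem exists_not_baireSet (hCB : IsCategoryBase Y C) {W : Set X} (hWC : W ∈ C)
    (hW : ∀ B ∈ C, B ⊆ W → ¬MeagerIn C B) {κ : Cardinal.{u}}
    (hκ : κ.IsRegular) (hXκ : #X ≤ κ) (φ : Set κ.ord.ToType → Set X)
    (hφ : ∀ a b, φ a ∩ φ b ⊆ φ (a ∩ b)) {s : Set κ.ord.ToType} (hs : IsCofinal s)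
    (hbdd : ∀ a ⊆ s, BddAbove a → MeagerIn C (φ a ∩ W))
    (hcof : ∀ a ⊆ s, IsCofinal a → ¬MeagerIn C (φ a ∩ W)) :
    ∃ a ⊆ s, ¬BaireSet Y C (φ a) := by
  by_contra! hBaire
  have hne : ∅ ∉ C := fun h => hW ∅ h (empty_subset W) meagerIn_empty
  obtain ⟨𝒜, h𝒜κ, h𝒜, h𝒜𝒜⟩ := hκ.exists_almostDisjoint_isCofinal hs
  have hB (a : 𝒜) : ∃ B ∈ C, B ⊆ W ∧ MeagerIn C ((Y \ φ a) ∩ B) :=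
    hCB.exists_subregion_meagerIn_diff (hBaire a (h𝒜 a a.2).1) hWC
      (hcof a (h𝒜 a a.2).1 (h𝒜 a a.2).2)
  choose B hBC hBW hBφ using hB
  refine ((hCB.mk_le_of_pairwise_not_sharesSubregion hne hBC fun a b hab ⟨E, hE, hEab⟩ => ?_).trans
    hXκ).not_gt h𝒜κ
  have hab : BddAbove (a ∩ b : Set κ.ord.ToType) := h𝒜𝒜 a.2 b.2 (Subtype.coe_injective.ne hab)
  refine hW E hE (hEab.trans (inter_subset_left.trans (hBW a))) <|
    (((hBφ a).union (hBφ b)).union (hbdd _ (inter_subset_left.trans (h𝒜 a a.2).1) hab)).mono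
      fun z hz => ?_
  have hzY : z ∈ Y := hCB.cover ▸ mem_sUnion_of_mem hz hE
  by_cases hza : z ∈ φ a
  · by_cases hzb : z ∈ φ b
    · exact .inr ⟨hφ a b ⟨hza, hzb⟩, hBW a (hEab hz).1⟩
    · exact .inl (.inr ⟨⟨hzY, hzb⟩, (hEab hz).2⟩)
  · exact .inl (.inl ⟨⟨hzY, hza⟩, (hEab hz).1⟩)

theorem exists_not_baireSet_biUnion (hCB : IsCategoryBase Set.univ C)
    (hX : ¬MeagerIn C (Set.univ : Set X)) {κ : Cardinal.{u}} (hκ : κ.IsRegular) (hXκ : #X ≤ κ)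
    {q : κ.ord.ToType → Set X} (hqbase : ∀ M, MeagerIn C M → ∃ i, M ⊆ q i)
    (hqbdd : ∀ s, BddAbove s → MeagerIn C (⋃ i ∈ s, q i))
    {T : Type*} {Xt : T → Set X} (hdisj : Pairwise (Disjoint on Xt))
    (hcover : ⋃ t, Xt t = Set.univ) (hmeager : ∀ t, MeagerIn C (Xt t)) :
    ∃ T' : Set T, ¬BaireSet Set.univ C (⋃ t ∈ T', Xt t) := by
  have := noMaxOrder hκ.aleph0_le
  obtain ⟨W, hWC, hW⟩ : ∃ W ∈ C, ∀ B ∈ C, B ⊆ W → ¬MeagerIn C B := by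
    by_contra! h
    exact hX (hCB.meagerIn_of_forall_exists_subregion fun A hA =>
      let ⟨B, hB, hBA, hBm⟩ := h A hA
      ⟨B, hB, hBA, hBm.mono inter_subset_right⟩)
  choose r hr hr_min using fun t => wellFounded_lt.has_min {i | Xt t ∩ W ⊆ q i}
    (hqbase _ ((hmeager t).mono inter_subset_left))
  have hbdd (a : Set κ.ord.ToType) (ha : BddAbove a) :
      MeagerIn C ((⋃ t ∈ r ⁻¹' a, Xt t) ∩ W) :=
    (hqbdd a ha).mono fun x ⟨hx, hxW⟩ => by
      obtain ⟨t, hta, hxt⟩ := mem_iUnion₂.1 hx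
      exact mem_iUnion₂.2 ⟨r t, hta, hr t ⟨hxt, hxW⟩⟩
  have hcof (a) (har : a ⊆ range r) (ha : IsCofinal a) :
      ¬MeagerIn C ((⋃ t ∈ r ⁻¹' a, Xt t) ∩ W) := fun hm => by
    obtain ⟨i, hi⟩ := hqbase _ hm
    obtain ⟨j, hij⟩ := exists_gt i
    obtain ⟨_, hka, hjk⟩ := ha j
    obtain ⟨t, rfl⟩ := har hka
    exact hr_min t i (fun x hx => hi ⟨mem_biUnion hka hx.1, hx.2⟩) (hij.trans_le hjk)
  have hrange : IsCofinal (range r) := by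
    by_contra h
    refine hW W hWC subset_rfl ((hbdd _ (not_isCofinal_iff_bddAbove.1 h)).mono fun x hx => ⟨?_, hx⟩)
    obtain ⟨t, ht⟩ := mem_iUnion.1 (hcover ▸ mem_univ x)
    exact mem_iUnion₂.2 ⟨t, mem_range_self t, ht⟩
  obtain ⟨a, -, ha⟩ := hCB.exists_not_baireSet hWC hW hκ hXκ _
    (fun a b => hdisj.biUnion_inter_biUnion_subset _ _) hrange
    (fun a _ => hbdd a) hcof
  exact ⟨r ⁻¹' a, ha⟩

end IsCategoryBase

/-- Hejduk: if in a category base `(X, S)` the σ-ideal of meager sets is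
`α`-additive for every cardinal `α < #(X)` and has a base of cardinality at most `#(X)`,
and `X` itself is not meager, then every partition of `X` into meager sets admits a
subfamily whose union is not a Baire set. -/
theorem hejduk_non_baire_union {X : Type u}
    (S : Set (Set X)) (hCB : IsCategoryBase (Set.univ : Set X) S)
    (hadd : ∀ (ι : Type u) (f : ι → Set X), Cardinal.mk ι < Cardinal.mk X →
      (∀ i, MeagerIn S (f i)) → MeagerIn S (⋃ i, f i))
    (hbase : ∃ P : Set (Set X), (∀ p ∈ P, MeagerIn S p) ∧
      (∀ M : Set X, MeagerIn S M → ∃ p ∈ P, M ⊆ p) ∧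
      Cardinal.mk P ≤ Cardinal.mk X)
    (hX : ¬ MeagerIn S (Set.univ : Set X))
    (T : Type*) (Xt : T → Set X)
    (hdisj : Pairwise (Function.onFun Disjoint Xt))
    (hcover : (⋃ t, Xt t) = Set.univ)
    (hmeager : ∀ t, MeagerIn S (Xt t)) :
    ∃ T' : Set T, ¬ BaireSet Set.univ S (⋃ t ∈ T', Xt t) := by
  choose τ hτ using fun x => mem_iUnion.1 (hcover ▸ mem_univ x : x ∈ ⋃ t, Xt t)
  have hκ : ℵ₀ ≤ #X := by
    by_contra! h
    have : Countable X := mk_le_aleph0_iff.1 h.le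
    exact hX ((MeagerIn.iUnion fun x => hmeager (τ x)).mono fun x _ => mem_iUnion.2 ⟨x, hτ x⟩)
  obtain ⟨q, hq, hqbase⟩ := exists_enum_of_meagerIn_base hbase
  have hreg : (#X).IsRegular := isRegular_of_meagerIn_iUnion hκ hadd hq
    (fun x => (hqbase _ (hmeager (τ x))).imp fun _ hi => hi (hτ x)) hX
  refine hCB.exists_not_baireSet_biUnion hX hreg le_rfl hqbase (fun s hs => ?_) hdisj hcover
    hmeager
  rw [biUnion_eq_iUnion]
  exact hadd s _ (mk_lt_of_bddAbove hκ hs) fun i => hq i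
end

section
/- Let (X, C) be a category base satisfying: (i) #(X) is a regular cardinal; (ii) (X, C) is a Baire base possessing a π-base C′ with #(C′) ≤ #(X); (iii) the family M of meager sets is #(X)-additive; (iv) #(X) = min{χ : C is χ-saturated}. Then every singular set in (X, C) is contained in a singular set belonging to the family ⋂_{<#(X)}K, and consequently every meager set is contained in a meager set belonging to the family ⋃_σ⋂_{<#(X)}K. -/
universe u

/-- under conditions (i)–(iv), every singular set is contained in a singular
set belonging to `⋂_{<#(X)} K`, and every meager set is contained in a meager set
belonging to `⋃_σ ⋂_{<#(X)} K`. -/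
theorem singular_hull_in_interFam {X : Type u}
    (C C' : Set (Set X)) (hCB : IsCategoryBase (Set.univ : Set X) C)
    (hreg : (Cardinal.mk X).IsRegular)
    (hBaire : IsBaireBase C)
    (hpi : IsPiBase C C') (hC'card : Cardinal.mk C' ≤ Cardinal.mk X)
    (hadd : ∀ E : Set (Set X), (∀ M ∈ E, MeagerIn C M) →
      Cardinal.mk E < Cardinal.mk X → MeagerIn C (⋃₀ E))
    (hsat : Cardinal.mk X = sInf {χ : Cardinal.{u} | Saturated C χ}) :
    (∀ A : Set X, Singular C A →
      ∃ A' : Set X, Singular C A' ∧ A ⊆ A' ∧ A' ∈ InterFam C') ∧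
    (∀ M : Set X, MeagerIn C M →
      ∃ M' : Set X, MeagerIn C M' ∧ M ⊆ M' ∧ M' ∈ SigmaInterFam C') := by
  classical
  have hCC' : C' ⊆ C := hpi.1
  -- there is at least one region
  obtain ⟨x0, hx0⟩ := hCB.carrier_nonempty
  have hx0' : x0 ∈ ⋃₀ C := by rw [hCB.cover]; exact hx0
  obtain ⟨A₀, hA₀C, -⟩ := hx0'
  -- every region is nonempty
  have hreg_ne : ∀ F ∈ C, F.Nonempty := by
    intro F hF
    rcases Set.eq_empty_or_nonempty F with h | h
    · refine absurd ⟨fun _ => (∅ : Set X), fun n => ?_, by simp [h]⟩ (hBaire F hF)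
      intro B hB
      exact ⟨B, hB, Set.Subset.rfl, Set.disjoint_empty B⟩
    · exact h
  have key : ∀ A : Set X, Singular C A →
      ∃ A' : Set X, Singular C A' ∧ A ⊆ A' ∧ A' ∈ InterFam C' := by
    intro A hA
    set G : Set (Set X) := {F | F ∈ C' ∧ Disjoint F A} with hGdef
    have hGC' : G ⊆ C' := fun F hF => hF.1
    have hGC : G ⊆ C := fun F hF => hCC' hF.1
    -- G is nonempty
    obtain ⟨B0, hB0C, hB0sub, hB0disj⟩ := hA A₀ hA₀C
    obtain ⟨F0, hF0C', hF0sub⟩ := hpi.2 B0 hB0C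
    have hF0G : F0 ∈ G := ⟨hF0C', Set.disjoint_of_subset_left hF0sub hB0disj⟩
    -- how to conclude from a suitable subfamily D of G
    have finish : ∀ D : Set (Set X), D ⊆ G → D.Nonempty → Cardinal.mk D < Cardinal.mk X →
        (∀ A₁ ∈ C, ∃ B ∈ C, B ⊆ A₁ ∧ Disjoint B (⋂₀ (compl '' D))) →
        ∃ A' : Set X, Singular C A' ∧ A ⊆ A' ∧ A' ∈ InterFam C' := by
      intro D hDG hDne hDcard hsing
      refine ⟨⋂₀ (compl '' D), hsing, ?_, ?_⟩
      · intro x hx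
        intro s hs
        obtain ⟨F, hF, rfl⟩ := hs
        intro hxF
        exact Set.disjoint_left.mp (hDG hF).2 hxF hx
      · refine ⟨compl '' D, ?_, hDne.image _, ?_, rfl⟩
        · exact Set.image_mono (hDG.trans hGC')
        · exact lt_of_le_of_lt (Cardinal.mk_image_le) hDcard
    by_cases hcard : Cardinal.mk C' < Cardinal.mk X
    · -- small π-base: take D = G
      refine finish G (fun _ h => h) ⟨F0, hF0G⟩
        (lt_of_le_of_lt (Cardinal.mk_le_mk_of_subset hGC') hcard) ?_
      intro A₁ hA₁
      obtain ⟨B, hBC, hBsub, hBdisj⟩ := hA A₁ hA₁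
      obtain ⟨B', hB'C', hB'sub⟩ := hpi.2 B hBC
      have hB'G : B' ∈ G := ⟨hB'C', Set.disjoint_of_subset_left hB'sub hBdisj⟩
      refine ⟨B', hCC' hB'C', hB'sub.trans hBsub, Set.disjoint_left.mpr ?_⟩
      intro x hxB' hxI
      exact (hxI B'ᶜ ⟨B', hB'G, rfl⟩) hxB'
    · -- mk C' = mk X ≤ mk C
      have hXC : Cardinal.mk X ≤ Cardinal.mk C := by
        calc Cardinal.mk X ≤ Cardinal.mk C' := not_lt.mp hcard
          _ ≤ Cardinal.mk C := Cardinal.mk_le_mk_of_subset hCC'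
      -- C is #(X)-saturated
      have hSne : {χ : Cardinal.{u} | Saturated C χ}.Nonempty := by
        by_contra h
        rw [Set.not_nonempty_iff_eq_empty] at h
        rw [h, Cardinal.sInf_empty] at hsat
        have : (0 : Cardinal.{u}) < Cardinal.mk X :=
          lt_of_lt_of_le Cardinal.aleph0_pos hreg.aleph0_le
        exact this.ne' hsat
      have hsatX : Saturated C (Cardinal.mk X) := by
        have := csInf_mem hSne
        rwa [← hsat] at this
      -- Zorn: maximal pairwise disjoint subfamily of G
      obtain ⟨D, hF0D, hDmax⟩ :=
        zorn_subset_nonempty {D : Set (Set X) | D ⊆ G ∧ D.Pairwise Disjoint}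
          (fun c hcS hchain hcne => by
            refine ⟨⋃₀ c, ⟨?_, ?_⟩, fun s hs => Set.subset_sUnion_of_mem hs⟩
            · intro F hF
              obtain ⟨d, hdc, hFd⟩ := hF
              exact (hcS hdc).1 hFd
            · intro s hs t ht hst
              obtain ⟨ds, hdsc, hsds⟩ := hs
              obtain ⟨dt, hdtc, htdt⟩ := ht
              rcases hchain.total hdsc hdtc with hle | hle
              · exact (hcS hdtc).2 (hle hsds) htdt hst
              · exact (hcS hdsc).2 hsds (hle htdt) hst)
          {F0} ⟨by simpa using hF0G, Set.pairwise_singleton _ _⟩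
      have hDG : D ⊆ G := hDmax.1.1
      have hDpair : D.Pairwise Disjoint := hDmax.1.2
      have hDne : D.Nonempty := ⟨F0, hF0D (Set.mem_singleton F0)⟩
      -- D has cardinality < #(X) by saturation
      have hDcard : Cardinal.mk D < Cardinal.mk X := by
        by_contra h
        obtain ⟨D₀, hD₀D, hD₀card⟩ :=
          Cardinal.le_mk_iff_exists_subset.mp (not_lt.mp h)
        obtain ⟨A₁, hA₁, B₁, hB₁, hne, x, hx⟩ :=
          hsatX D₀ (hD₀D.trans (hDG.trans hGC)) hD₀card
        exact Set.disjoint_left.mp (hDpair (hD₀D hA₁) (hD₀D hB₁) hne) hx.1 hx.2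
      have hDcardC : Cardinal.mk D < Cardinal.mk C := lt_of_lt_of_le hDcard hXC
      refine finish D hDG hDne hDcard ?_
      intro A₁ hA₁
      obtain ⟨B, hBC, hBsub, hBdisj⟩ := hA A₁ hA₁
      obtain ⟨B', hB'C', hB'sub⟩ := hpi.2 B hBC
      have hB'C : B' ∈ C := hCC' hB'C'
      by_cases hex : ∃ E ∈ C, E ⊆ B' ∩ ⋃₀ D
      · obtain ⟨F, hFD, E₂, hE₂C, hE₂sub⟩ :=
          hCB.meet B' hB'C D (hDG.trans hGC) hDne hDpair hDcardC hex
        refine ⟨E₂, hE₂C, ?_, Set.disjoint_left.mpr ?_⟩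
        · exact fun x hx => hBsub (hB'sub (hE₂sub hx).1)
        · intro x hxE hxI
          exact (hxI Fᶜ ⟨F, hFD, rfl⟩) (hE₂sub hxE).2
      · exfalso
        obtain ⟨B'', hB''C, hB''sub, hB''disj⟩ :=
          hCB.avoid B' hB'C D (hDG.trans hGC) hDne hDpair hDcardC hex
        obtain ⟨B₂, hB₂C, hB₂sub, hB₂disj⟩ := hA B'' hB''C
        obtain ⟨B₃, hB₃C', hB₃sub⟩ := hpi.2 B₂ hB₂C
        have hB₃G : B₃ ∈ G := ⟨hB₃C', Set.disjoint_of_subset_left hB₃sub hB₂disj⟩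
        have hB₃dis : ∀ F ∈ D, Disjoint B₃ F := fun F hF =>
          Set.disjoint_of_subset_left (hB₃sub.trans hB₂sub) (hB''disj F hF)
        have hins : insert B₃ D ∈ {D : Set (Set X) | D ⊆ G ∧ D.Pairwise Disjoint} := by
          constructor
          · intro F hF
            rcases hF with rfl | hF
            · exact hB₃G
            · exact hDG hF
          · intro s hs t ht hst
            rcases hs with rfl | hs
            · rcases ht with rfl | ht
              · exact absurd rfl hst
              · exact hB₃dis t ht
            · rcases ht with rfl | ht
              · exact (hB₃dis s hs).symm
              · exact hDpair hs ht hst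
        have hB₃D : B₃ ∈ D := hDmax.2 hins (Set.subset_insert _ _) (Set.mem_insert _ _)
        obtain ⟨y, hy⟩ := hreg_ne B₃ (hCC' hB₃C')
        exact Set.disjoint_left.mp (hB₃dis B₃ hB₃D) hy hy
  refine ⟨key, ?_⟩
  rintro M ⟨f, hf, rfl⟩
  choose g hg₁ hg₂ hg₃ using fun n => key (f n) (hf n)
  exact ⟨⋃ n, g n, ⟨g, hg₁, rfl⟩, Set.iUnion_mono hg₂, g, hg₃, rfl⟩
end

section
/- Let (X, C) be a category base satisfying: (i) #(X) is a regular cardinal; (ii) (X, C) is a Baire base possessing a π-base C′ with #(C′) ≤ #(X); (iii) the family M of meager sets is #(X)-additive; (iv) #(X) = min{χ : C is χ-saturated}. Then every abundant Baire set contains a set of the form F − G where F ∈ C′ and G is a meager set belonging to the family ⋃_σ⋂_{<#(X)}K. -/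
universe u

namespace CBAux

variable {X : Type u}

lemma singular_mono (C : Set (Set X)) {S T : Set X} (h : Singular C S) (hTS : T ⊆ S) :
    Singular C T := by
  intro A hA
  obtain ⟨B, hB, h1, h2⟩ := h A hA
  exact ⟨B, hB, h1, h2.mono_right hTS⟩

lemma singular_empty (C : Set (Set X)) : Singular C (∅ : Set X) :=
  fun A hA => ⟨A, hA, subset_rfl, disjoint_bot_right⟩

lemma singular_meager (C : Set (Set X)) {S : Set X} (h : Singular C S) : MeagerIn C S :=
  ⟨fun _ => S, fun _ => h, (Set.iUnion_const S).symm⟩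

lemma meager_empty (C : Set (Set X)) : MeagerIn C (∅ : Set X) :=
  singular_meager C (singular_empty C)

lemma meager_mono (C : Set (Set X)) {S T : Set X} (h : MeagerIn C S) (hTS : T ⊆ S) :
    MeagerIn C T := by
  obtain ⟨f, hf, rfl⟩ := h
  refine ⟨fun n => f n ∩ T, fun n => singular_mono C (hf n) Set.inter_subset_left, ?_⟩
  ext x
  simp only [Set.mem_iUnion, Set.mem_inter_iff]
  constructor
  · intro hx
    obtain ⟨n, hn⟩ := Set.mem_iUnion.mp (hTS hx)
    exact ⟨n, hn, hx⟩
  · rintro ⟨n, _, hx⟩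
    exact hx

lemma region_ne_empty {C : Set (Set X)} (hBaire : IsBaireBase C) {B : Set X} (hB : B ∈ C) :
    B ≠ ∅ := fun h => hBaire B hB (h ▸ meager_empty C)

lemma exists_region {C : Set (Set X)} (hCB : IsCategoryBase (Set.univ : Set X) C) :
    ∃ A, A ∈ C := by
  obtain ⟨x, -⟩ := hCB.carrier_nonempty
  have hx : x ∈ ⋃₀ C := by rw [hCB.cover]; trivial
  obtain ⟨A, hA, -⟩ := hx
  exact ⟨A, hA⟩

/-- Every pairwise disjoint subfamily of `C` has cardinality `< #(X)`. -/
lemma disjoint_family_small {C : Set (Set X)} (hreg : (Cardinal.mk X).IsRegular)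
    (hsat : Cardinal.mk X = sInf {χ : Cardinal.{u} | Saturated C χ})
    {D : Set (Set X)} (hDC : D ⊆ C) (hdisj : D.Pairwise Disjoint) :
    Cardinal.mk D < Cardinal.mk X := by
  by_contra hcon
  push_neg at hcon
  have hne : {χ : Cardinal.{u} | Saturated C χ}.Nonempty := by
    refine ⟨Order.succ (Cardinal.mk (Set X)), ?_⟩
    intro E hEC hE
    exfalso
    have h1 : Cardinal.mk E ≤ Cardinal.mk (Set X) := Cardinal.mk_set_le E
    rw [hE] at h1
    exact absurd h1 (not_le.mpr (Order.lt_succ _))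
  have hsatX : Saturated C (Cardinal.mk X) := by
    have := csInf_mem hne
    rwa [← hsat] at this
  obtain ⟨p, hpD, hp⟩ := Cardinal.le_mk_iff_exists_subset.mp hcon
  obtain ⟨A, hA, B, hB, hAB, hABne⟩ := hsatX p (hpD.trans hDC) hp
  have : Disjoint A B := hdisj (hpD hA) (hpD hB) hAB
  exact hABne.not_subset_empty (by
    intro x hx
    exact (Set.disjoint_iff_inter_eq_empty.mp this) ▸ hx)

/-- Zorn: maximal pairwise disjoint subfamily of `W`. -/
lemma exists_maximal_disjoint (W : Set (Set X)) :
    ∃ D, Maximal (fun D => D ⊆ W ∧ D.Pairwise Disjoint) D := by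
  apply zorn_subset
  intro c hc hchain
  refine ⟨⋃₀ c, ⟨Set.sUnion_subset fun d hd => (hc hd).1, ?_⟩,
    fun s hs => Set.subset_sUnion_of_mem hs⟩
  intro a ha b hb hab
  obtain ⟨da, hda, ha⟩ := ha
  obtain ⟨db, hdb, hb⟩ := hb
  rcases eq_or_ne da db with h | h
  · exact (hc hdb).2 (h ▸ ha) hb hab
  · rcases hchain hda hdb h with h' | h'
    · exact (hc hdb).2 (h' ha) hb hab
    · exact (hc hda).2 ha (h' hb) hab

/-- Given a family `W ⊆ C` that is "dense" (every region contains a member of `W`),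
and assuming `#(X) ≤ card C`, there is a nonempty subfamily `D ⊆ W` of cardinality
`< #(X)` whose union is everywhere of second category: every region has a subregion
inside `A ∩ ⋃₀ D`. -/
lemma maximal_disjoint_dense {C : Set (Set X)} (hCB : IsCategoryBase (Set.univ : Set X) C)
    (hreg : (Cardinal.mk X).IsRegular) (hBaire : IsBaireBase C)
    (hsat : Cardinal.mk X = sInf {χ : Cardinal.{u} | Saturated C χ})
    (hXC : Cardinal.mk X ≤ Cardinal.mk C)
    {W : Set (Set X)} (hWC : W ⊆ C)
    (hWdense : ∀ B ∈ C, ∃ B' ∈ W, B' ⊆ B) :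
    ∃ D ⊆ W, D.Nonempty ∧ Cardinal.mk D < Cardinal.mk X ∧
      ∀ A ∈ C, ∃ B ∈ C, B ⊆ A ∩ ⋃₀ D := by
  obtain ⟨D, hDmax⟩ := exists_maximal_disjoint W
  obtain ⟨hDW, hDdisj⟩ := hDmax.1
  have hDC : D ⊆ C := hDW.trans hWC
  have hDsmall : Cardinal.mk D < Cardinal.mk X := disjoint_family_small hreg hsat hDC hDdisj
  -- D is nonempty
  have hDne : D.Nonempty := by
    obtain ⟨A0, hA0⟩ := exists_region hCB
    obtain ⟨B0, hB0W, -⟩ := hWdense A0 hA0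
    rcases Set.eq_empty_or_nonempty D with h | h
    · exfalso
      have hmem : B0 ∈ D := by
        have := hDmax.2 (y := {B0}) ⟨Set.singleton_subset_iff.mpr hB0W,
          Set.pairwise_singleton _ _⟩ (h ▸ Set.empty_subset _)
        exact this rfl
      rw [h] at hmem
      exact hmem
    · exact h
  refine ⟨D, hDW, hDne, hDsmall, ?_⟩
  intro A hA
  by_contra hno
  push_neg at hno
  have hnoE : ¬ ∃ E ∈ C, E ⊆ A ∩ ⋃₀ D := by
    rintro ⟨E, hE, hEsub⟩
    exact hno E hE hEsub
  obtain ⟨B, hB, hBA, hBdisj⟩ := hCB.avoid A hA D hDC hDne hDdisj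
    (lt_of_lt_of_le hDsmall hXC) hnoE
  obtain ⟨B', hB'W, hB'B⟩ := hWdense B hB
  have hB'C : B' ∈ C := hWC hB'W
  have hB'notD : B' ∉ D := by
    intro hmem
    have : Disjoint B B' := hBdisj B' hmem
    have : Disjoint B' B' := this.mono_left hB'B
    exact region_ne_empty hBaire hB'C (disjoint_self.mp this)
  have hins : (insert B' D) ⊆ W ∧ (insert B' D).Pairwise Disjoint := by
    refine ⟨Set.insert_subset hB'W hDW, hDdisj.insert ?_⟩
    intro d hd _
    have : Disjoint B' d := (hBdisj d hd).mono_left hB'B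
    exact ⟨this, this.symm⟩
  have := hDmax.2 hins (Set.subset_insert _ _)
  exact hB'notD (this (Set.mem_insert _ _))

/-- Core envelope construction: from a nonempty small `V ⊆ C'` whose union is
"everywhere dense" and each member disjoint from `T`, build the `InterFam` envelope. -/
lemma envelope_of {C C' : Set (Set X)} (hpi : IsPiBase C C') {T : Set X}
    {V : Set (Set X)} (hVC' : V ⊆ C') (hVne : V.Nonempty)
    (hVcard : Cardinal.mk V < Cardinal.mk X)
    (hdense : ∀ A ∈ C, ∃ B ∈ C, B ⊆ A ∩ ⋃₀ V)
    (hTdisj : ∀ B ∈ V, Disjoint B T) :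
    ∃ G ∈ InterFam C', Singular C G ∧ T ⊆ G := by
  refine ⟨(⋃₀ V)ᶜ, ⟨compl '' V, Set.image_mono hVC', hVne.image _,
    lt_of_le_of_lt Cardinal.mk_image_le hVcard, Set.compl_sUnion V⟩, ?_, ?_⟩
  · intro A hA
    obtain ⟨B, hB, hBsub⟩ := hdense A hA
    refine ⟨B, hB, hBsub.trans Set.inter_subset_left, ?_⟩
    exact disjoint_compl_right.mono_left (hBsub.trans Set.inter_subset_right)
  · intro x hx
    simp only [Set.mem_compl_iff, Set.mem_sUnion, not_exists, not_and]
    exact fun B hBV hxB => (hTdisj B hBV).ne_of_mem hxB hx rfl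

/-- Every singular set is contained in a singular set belonging to `InterFam C'`. -/
lemma singular_envelope {C C' : Set (Set X)} (hCB : IsCategoryBase (Set.univ : Set X) C)
    (hreg : (Cardinal.mk X).IsRegular) (hBaire : IsBaireBase C)
    (hpi : IsPiBase C C')
    (hsat : Cardinal.mk X = sInf {χ : Cardinal.{u} | Saturated C χ})
    {T : Set X} (hT : Singular C T) :
    ∃ G ∈ InterFam C', Singular C G ∧ T ⊆ G := by
  classical
  set W : Set (Set X) := {B ∈ C' | Disjoint B T} with hWdef
  have hWC' : W ⊆ C' := Set.sep_subset _ _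
  have hWC : W ⊆ C := hWC'.trans hpi.1
  have hWdense : ∀ B ∈ C, ∃ B' ∈ W, B' ⊆ B := by
    intro B hB
    obtain ⟨B1, hB1, hB1B, hB1T⟩ := hT B hB
    obtain ⟨B2, hB2, hB2B1⟩ := hpi.2 B1 hB1
    exact ⟨B2, ⟨hB2, hB1T.mono_left hB2B1⟩, hB2B1.trans hB1B⟩
  have hWne : W.Nonempty := by
    obtain ⟨A0, hA0⟩ := exists_region hCB
    obtain ⟨B0, hB0, -⟩ := hWdense A0 hA0
    exact ⟨B0, hB0⟩
  by_cases hsmall : Cardinal.mk W < Cardinal.mk X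
  · refine envelope_of hpi hWC' hWne hsmall ?_ (fun B hB => hB.2)
    intro A hA
    obtain ⟨B', hB'W, hB'A⟩ := hWdense A hA
    exact ⟨B', hWC hB'W, Set.subset_inter hB'A (Set.subset_sUnion_of_mem hB'W)⟩
  · push_neg at hsmall
    have hXC : Cardinal.mk X ≤ Cardinal.mk C :=
      hsmall.trans (Cardinal.mk_le_mk_of_subset hWC)
    obtain ⟨D, hDW, hDne, hDcard, hDdense⟩ :=
      maximal_disjoint_dense hCB hreg hBaire hsat hXC hWC hWdense
    exact envelope_of hpi (hDW.trans hWC') hDne hDcard hDdense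
      (fun B hB => (hDW hB).2)

/-- Every meager set is contained in a meager set belonging to `SigmaInterFam C'`. -/
lemma meager_envelope {C C' : Set (Set X)} (hCB : IsCategoryBase (Set.univ : Set X) C)
    (hreg : (Cardinal.mk X).IsRegular) (hBaire : IsBaireBase C)
    (hpi : IsPiBase C C')
    (hsat : Cardinal.mk X = sInf {χ : Cardinal.{u} | Saturated C χ})
    {T : Set X} (hT : MeagerIn C T) :
    ∃ G : Set X, MeagerIn C G ∧ G ∈ SigmaInterFam C' ∧ T ⊆ G := by
  obtain ⟨f, hf, rfl⟩ := hT
  have : ∀ n, ∃ G ∈ InterFam C', Singular C G ∧ f n ⊆ G :=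
    fun n => singular_envelope hCB hreg hBaire hpi hsat (hf n)
  choose g hg1 hg2 hg3 using this
  refine ⟨⋃ n, g n, ⟨g, hg2, rfl⟩, ⟨g, hg1, rfl⟩, ?_⟩
  exact Set.iUnion_mono hg3

/-- An abundant Baire set is comeager in some region. -/
lemma exists_comeager_region {C : Set (Set X)} (hCB : IsCategoryBase (Set.univ : Set X) C)
    (hreg : (Cardinal.mk X).IsRegular) (hBaire : IsBaireBase C)
    (hadd : ∀ E : Set (Set X), (∀ M ∈ E, MeagerIn C M) →
      Cardinal.mk E < Cardinal.mk X → MeagerIn C (⋃₀ E))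
    (hsat : Cardinal.mk X = sInf {χ : Cardinal.{u} | Saturated C χ})
    {S : Set X} (hS : BaireSet Set.univ C S) (hab : Abundant C S) :
    ∃ B ∈ C, MeagerIn C ((Set.univ \ S) ∩ B) := by
  classical
  by_contra hno
  push_neg at hno
  set W : Set (Set X) := {B ∈ C | MeagerIn C (S ∩ B)} with hWdef
  have hWC : W ⊆ C := Set.sep_subset _ _
  have hWdense : ∀ B ∈ C, ∃ B' ∈ W, B' ⊆ B := by
    intro B hB
    obtain ⟨B', hB', hB'B, hcase⟩ := hS B hB
    rcases hcase with h | h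
    · exact ⟨B', ⟨hB', h⟩, hB'B⟩
    · exact absurd h (hno B' hB')
  -- produce V ⊆ W, small, dense
  have key : ∃ V ⊆ W, Cardinal.mk V < Cardinal.mk X ∧
      ∀ A ∈ C, ∃ B ∈ C, B ⊆ A ∩ ⋃₀ V := by
    by_cases hsmall : Cardinal.mk C < Cardinal.mk X
    · refine ⟨W, subset_rfl, lt_of_le_of_lt (Cardinal.mk_le_mk_of_subset hWC) hsmall, ?_⟩
      intro A hA
      obtain ⟨B', hB'W, hB'A⟩ := hWdense A hA
      exact ⟨B', hWC hB'W, Set.subset_inter hB'A (Set.subset_sUnion_of_mem hB'W)⟩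
    · push_neg at hsmall
      obtain ⟨D, hDW, _, hDcard, hDdense⟩ :=
        maximal_disjoint_dense hCB hreg hBaire hsat hsmall hWC hWdense
      exact ⟨D, hDW, hDcard, hDdense⟩
  obtain ⟨V, hVW, hVcard, hVdense⟩ := key
  -- the complement of ⋃₀ V is singular
  have hGsing : Singular C (⋃₀ V)ᶜ := by
    intro A hA
    obtain ⟨B, hB, hBsub⟩ := hVdense A hA
    exact ⟨B, hB, hBsub.trans Set.inter_subset_left,
      disjoint_compl_right.mono_left (hBsub.trans Set.inter_subset_right)⟩
  -- S is covered by (⋃₀ V)ᶜ together with the meager sets S ∩ B, B ∈ V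
  set E : Set (Set X) := insert ((⋃₀ V)ᶜ) ((fun B => S ∩ B) '' V) with hEdef
  have hEmeager : ∀ M ∈ E, MeagerIn C M := by
    intro M hM
    rcases hM with h | ⟨B, hBV, rfl⟩
    · exact h ▸ singular_meager C hGsing
    · exact (hVW hBV).2
  have hEcard : Cardinal.mk E < Cardinal.mk X := by
    have h1 : Cardinal.mk ((fun B => S ∩ B) '' V) ≤ Cardinal.mk V := Cardinal.mk_image_le
    have h2 : Cardinal.mk E ≤ Cardinal.mk ((fun B => S ∩ B) '' V) + 1 :=
      Cardinal.mk_insert_le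
    have h3 : Cardinal.mk ((fun B => S ∩ B) '' V) < Cardinal.mk X :=
      lt_of_le_of_lt h1 hVcard
    refine lt_of_le_of_lt h2 (Cardinal.add_lt_of_lt hreg.aleph0_le h3 ?_)
    exact lt_of_lt_of_le Cardinal.one_lt_aleph0 hreg.aleph0_le
  have hcover : S ⊆ ⋃₀ E := by
    intro x hx
    by_cases hxV : x ∈ ⋃₀ V
    · obtain ⟨B, hBV, hxB⟩ := hxV
      exact ⟨S ∩ B, Set.mem_insert_iff.mpr (Or.inr ⟨B, hBV, rfl⟩), hx, hxB⟩
    · exact ⟨(⋃₀ V)ᶜ, Set.mem_insert _ _, hxV⟩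
  exact hab (meager_mono C (hadd E hEmeager hEcard) hcover)

end CBAux

/-- under conditions (i)–(iv), every abundant Baire set contains a set of
the form `F − G` with `F ∈ C'` and `G` a meager set in `⋃_σ ⋂_{<#(X)} K`. -/
theorem abundant_baire_contains_F_minus_G {X : Type u}
    (C C' : Set (Set X)) (hCB : IsCategoryBase (Set.univ : Set X) C)
    (hreg : (Cardinal.mk X).IsRegular)
    (hBaire : IsBaireBase C)
    (hpi : IsPiBase C C') (hC'card : Cardinal.mk C' ≤ Cardinal.mk X)
    (hadd : ∀ E : Set (Set X), (∀ M ∈ E, MeagerIn C M) →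
      Cardinal.mk E < Cardinal.mk X → MeagerIn C (⋃₀ E))
    (hsat : Cardinal.mk X = sInf {χ : Cardinal.{u} | Saturated C χ}) :
    ∀ S : Set X, BaireSet Set.univ C S → Abundant C S →
      ∃ F ∈ C', ∃ G : Set X, MeagerIn C G ∧ G ∈ SigmaInterFam C' ∧ F \ G ⊆ S := by
  
  classical
  intro S hSBaire hSab
  obtain ⟨B, hB, hBmeager⟩ :=
    CBAux.exists_comeager_region hCB hreg hBaire hadd hsat hSBaire hSab
  obtain ⟨F, hF, hFB⟩ := hpi.2 B hB
  have hFS : MeagerIn C (F \ S) := by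
    refine CBAux.meager_mono C hBmeager ?_
    intro x hx
    exact ⟨⟨trivial, hx.2⟩, hFB hx.1⟩
  obtain ⟨G, hGmeager, hGsigma, hFSG⟩ :=
    CBAux.meager_envelope hCB hreg hBaire hpi hsat hFS
  refine ⟨F, hF, G, hGmeager, hGsigma, ?_⟩
  intro x hx
  by_contra hxS
  exact hx.2 (hFSG ⟨hx.1, hxS⟩)
end
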